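/- arXiv:1211.0229 — 14 statements merged into one kernel-verified Lean document; each statement's English description precedes it below -/
import Mathlib

section
/- Let X be a nonempty set and F : X → X any map. In the space B(X) of bounded real-valued functions on X with the supremum norm, the distance from the constant function 1 to the set of coboundaries {φ∘F − φ : φ ∈ B(X)} equals 1; that is, inf over bounded φ : X → ℝ of sup_{x ∈ X} |1 − (φ(F x) − φ(x))| = 1. -/
/-!
A coboundary `φ ∘ F - φ` of a bounded `φ` cannot stay above a positive constant `c`: summing
along an orbit gives `φ (F^[n] x) - φ x ≥ n c`, which is unbounded in `n`. If the sup distance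
`s` from `1` to `φ ∘ F - φ` were below `1`, the coboundary would stay above `1 - s > 0`.
The distance `1` itself is attained by `φ = 0`.
-/

section Coboundary

variable {X : Type*} {F : X → X} {φ : X → ℝ} {c C : ℝ}

theorem add_natCast_mul_le_apply_iterate_of_le_sub (h : ∀ x, c ≤ φ (F x) - φ x)
    (n : ℕ) (x : X) :
    φ x + n * c ≤ φ (F^[n] x) := by
  induction n generalizing x with
  | zero => simp
  | succ n ih =>
    rw [Function.iterate_succ_apply]
    push_cast
    linarith [ih (F x), h x]

theorem nonpos_of_le_coboundary [Nonempty X] (hφ : ∀ x, |φ x| ≤ C)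
    (h : ∀ x, c ≤ φ (F x) - φ x) : c ≤ 0 := by
  obtain ⟨x⟩ := ‹Nonempty X›
  by_contra! hc
  obtain ⟨n, hn⟩ := exists_nat_gt (2 * C / c)
  have h_orbit := add_natCast_mul_le_apply_iterate_of_le_sub h n x
  rw [div_lt_iff₀ hc] at hn
  linarith [abs_le.mp (hφ x), abs_le.mp (hφ (F^[n] x))]

theorem bddAbove_range_abs_one_sub_coboundary (hφ : ∀ x, |φ x| ≤ C) :
    BddAbove (Set.range fun x ↦ |1 - (φ (F x) - φ x)|) := by
  refine ⟨1 + 2 * C, ?_⟩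
  rintro _ ⟨x, rfl⟩
  have := abs_le.mp (hφ x)
  have := abs_le.mp (hφ (F x))
  exact abs_le.mpr ⟨by linarith, by linarith⟩

theorem one_le_iSup_abs_one_sub_coboundary [Nonempty X] (hφ : ∀ x, |φ x| ≤ C) :
    1 ≤ ⨆ x, |1 - (φ (F x) - φ x)| := by
  have h_lower : ∀ x, 1 - ⨆ y, |1 - (φ (F y) - φ y)| ≤ φ (F x) - φ x := fun x ↦ by
    have := (le_abs_self (1 - (φ (F x) - φ x))).trans
      (le_ciSup (bddAbove_range_abs_one_sub_coboundary hφ) x)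
    linarith
  linarith [nonpos_of_le_coboundary hφ h_lower]

end Coboundary

/-- For any nonempty set `X` and any map `F : X → X`, in the space of
bounded real-valued functions on `X` with the sup norm, the distance from the
constant function `1` to the set of coboundaries `{φ ∘ F − φ : φ bounded}` equals `1`. -/
theorem dist_one_to_coboundaries {X : Type*} [Nonempty X] (F : X → X) :
    sInf {d : ℝ | ∃ φ : X → ℝ, (∃ C : ℝ, ∀ x, |φ x| ≤ C) ∧
      d = ⨆ x : X, |1 - (φ (F x) - φ x)|} = 1 := by
  refine IsLeast.csInf_eq ⟨⟨0, ⟨0, by simp⟩, by simp⟩, ?_⟩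
  rintro d ⟨φ, ⟨C, hC⟩, rfl⟩
  exact one_le_iSup_abs_one_sub_coboundary hC
end

section
/- Let X be a nonempty set, F : X → X a map, and γ : X → ℝ a function with γ(x) > 0 for all x ∈ X. Then the cohomological equation φ(F x) − φ(x) = γ(x) has a solution φ : X → ℝ if and only if F has no periodic points, i.e. there is no x ∈ X and integer p ≥ 1 with F^p x = x. -/
/-!
If `φ ∘ F - φ = γ`, the Birkhoff sums of `γ` telescope: `∑_{i<p} γ (F^[i] x) = φ (F^[p] x) - φ x`,
so at a point of period `p` a sum of positive terms would vanish.

Conversely, without periodic points every forward orbit is injective. Choose a base point `b` in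
each grand orbit (the classes of `x ~ y ↔ ∃ m n, F^[m] x = F^[n] y`) and, for `x` with
`F^[m] x = F^[n] b`, put `φ x = ∑_{i<n} γ (F^[i] b) - ∑_{i<m} γ (F^[i] x)`. Injectivity of the
orbit of `b` makes this independent of `m` and `n`, and the choice `(m (F x) + 1, n (F x))` for `x`
gives `φ (F x) - φ x = γ x`.
-/

open Function Set

section

variable {X G : Type*}

theorem birkhoffSum_eq_iterate_sub_of_apply_sub_eq [AddCommGroup G] {F : X → X} {φ γ : X → G}
    (h : ∀ x, φ (F x) - φ x = γ x) (n : ℕ) (x : X) :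
    birkhoffSum F γ n x = φ (F^[n] x) - φ x := by
  induction n with
  | zero => simp
  | succ n ih => rw [birkhoffSum_succ, ih, ← h, iterate_succ_apply']; abel

theorem periodicPts_eq_empty_of_apply_sub_eq_pos [AddCommGroup G] [PartialOrder G]
    [IsOrderedAddMonoid G] {F : X → X} {φ γ : X → G} (hγ : ∀ x, 0 < γ x)
    (h : ∀ x, φ (F x) - φ x = γ x) : periodicPts F = ∅ := by
  refine eq_empty_iff_forall_notMem.2 fun x ⟨n, hn, hx⟩ => ?_
  have hsum := birkhoffSum_eq_iterate_sub_of_apply_sub_eq h n x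
  rw [hx.eq, sub_self] at hsum
  exact (Finset.sum_pos (fun i _ => hγ _) (Finset.nonempty_range_iff.2 hn.ne')).ne' hsum

theorem iterate_injective_of_periodicPts_eq_empty {F : X → X} (hF : periodicPts F = ∅) (x : X) :
    Injective (F^[·] x) := by
  refine Injective.of_lt_imp_ne fun m n hmn heq => ?_
  have hper : IsPeriodicPt F (n - m) (F^[m] x) := by
    rw [IsPeriodicPt, IsFixedPt, ← iterate_add_apply, Nat.sub_add_cancel hmn.le]
    exact heq.symm
  simpa [hF] using mk_mem_periodicPts (Nat.sub_pos_of_lt hmn) hper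

def grandOrbitSetoid (F : X → X) : Setoid X where
  r x y := ∃ m n, F^[m] x = F^[n] y
  iseqv :=
    ⟨fun _ => ⟨0, 0, rfl⟩, fun ⟨m, n, h⟩ => ⟨n, m, h.symm⟩, fun ⟨m, n, h⟩ ⟨m', n', h'⟩ =>
      ⟨m' + m, n + n', by
        rw [iterate_add_apply, h, ← iterate_add_apply, add_comm, iterate_add_apply, h',
          ← iterate_add_apply]⟩⟩

theorem birkhoffSum_sub_birkhoffSum_eq_of_iterate_eq [AddCommGroup G] {F : X → X}
    (hF : periodicPts F = ∅) (γ : X → G) {x b : X} {a c a' c' : ℕ}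
    (h : F^[a] x = F^[c] b) (h' : F^[a'] x = F^[c'] b) :
    birkhoffSum F γ c b - birkhoffSum F γ a x = birkhoffSum F γ c' b - birkhoffSum F γ a' x := by
  wlog hle : a ≤ a' generalizing a c a' c'
  · exact (this h' h (le_of_not_ge hle)).symm
  obtain ⟨d, rfl⟩ := Nat.exists_eq_add_of_le hle
  obtain rfl : c' = c + d := iterate_injective_of_periodicPts_eq_empty hF b <| by
    change F^[c'] b = F^[c + d] b
    rw [← h', add_comm, iterate_add_apply, h, ← iterate_add_apply, add_comm]
  rw [birkhoffSum_add, birkhoffSum_add, h]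
  abel

theorem exists_apply_sub_eq_of_periodicPts_eq_empty [AddCommGroup G] {F : X → X}
    (hF : periodicPts F = ∅) (γ : X → G) : ∃ φ : X → G, ∀ x, φ (F x) - φ x = γ x := by
  let _ : Setoid X := grandOrbitSetoid F
  let base (x : X) : X := (⟦x⟧ : Quotient (grandOrbitSetoid F)).out
  have hbase (x : X) : base (F x) = base x := congrArg Quotient.out (Quotient.sound ⟨0, 1, rfl⟩)
  have hmeet (x : X) : ∃ m n, F^[m] x = F^[n] (base x) := Setoid.symm (Quotient.mk_out x)
  choose m n hmn using hmeet
  refine ⟨fun x => birkhoffSum F γ (n x) (base x) - birkhoffSum F γ (m x) x, fun x => ?_⟩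
  have hmeet' : F^[m (F x) + 1] x = F^[n (F x)] (base x) := by
    rw [iterate_succ_apply, hmn, hbase]
  have hwd := birkhoffSum_sub_birkhoffSum_eq_of_iterate_eq hF γ (hmn x) hmeet'
  rw [birkhoffSum_succ'] at hwd
  simp only [hbase, hwd]
  abel

end

theorem cohomological_solvable_iff_no_periodic_points_general
    {X : Type*} (F : X → X) (γ : X → ℝ) (hγ : ∀ x, 0 < γ x) :
    (∃ φ : X → ℝ, ∀ x, φ (F x) - φ x = γ x) ↔
      ¬ ∃ (x : X) (p : ℕ), 1 ≤ p ∧ F^[p] x = x := by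
  have hper : (¬ ∃ (x : X) (p : ℕ), 1 ≤ p ∧ F^[p] x = x) ↔ periodicPts F = ∅ := by
    simp [eq_empty_iff_forall_notMem, mem_periodicPts, IsPeriodicPt, IsFixedPt,
      Nat.lt_iff_add_one_le]
  rw [hper]
  exact ⟨fun ⟨_, hφ⟩ => periodicPts_eq_empty_of_apply_sub_eq_pos hγ hφ,
    fun hF => exists_apply_sub_eq_of_periodicPts_eq_empty hF γ⟩

/-- For a strictly positive `γ`, the cohomological equation
`φ(F x) − φ(x) = γ(x)` has a solution iff `F` has no periodic points. -/
theorem cohomological_solvable_iff_no_periodic_points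
    {X : Type*} [Nonempty X] (F : X → X) (γ : X → ℝ) (hγ : ∀ x, 0 < γ x) :
    (∃ φ : X → ℝ, ∀ x, φ (F x) - φ x = γ x) ↔
      ¬ ∃ (x : X) (p : ℕ), 1 ≤ p ∧ F^[p] x = x :=
  cohomological_solvable_iff_no_periodic_points_general F γ hγ
end

section
/- Let X be a set, F : X → X a map, γ : X → ℝ, s_n(x) = ∑_{k=0}^{n} γ(F^k x), and σ_N(x) = (1/(N+1)) ∑_{n=0}^{N} s_n(x) the Cesàro means of the resolving series. Let C_γ be the set of x ∈ X for which σ(x) = lim_{N→∞} σ_N(x) exists. Then C_γ is completely invariant (x ∈ C_γ if and only if F x ∈ C_γ), and the function −σ satisfies the cohomological equation on C_γ: for all x ∈ C_γ, −σ(F x) − (−σ(x)) = γ(x). -/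
/-!
Writing `a k = γ (F^[k] x)`, the orbit of `F x` gives the shifted sequence `k ↦ a (k + 1)`,
whose partial sums are `s_{n+1}(x) - γ x`. Averaging gives
`σ_N(F x) = (N + 2) / (N + 1) * (σ_{N+1}(x) - γ x)`, and the factor tends to `1`, so one
Cesàro mean converges iff the other does, with limits differing by `γ x`.
-/

open Filter Finset Topology Asymptotics

noncomputable def cesaroMeanPartialSums (a : ℕ → ℝ) (N : ℕ) : ℝ :=
  (∑ n ∈ range (N + 1), ∑ k ∈ range (n + 1), a k) / (N + 1)

lemma sum_partialSums_succ_eq (a : ℕ → ℝ) (N : ℕ) :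
    ∑ n ∈ range (N + 2), ∑ k ∈ range (n + 1), a k
      = (N + 2) * a 0 + ∑ n ∈ range (N + 1), ∑ k ∈ range (n + 1), a (k + 1) := by
  have partialSum_succ : ∀ n, ∑ k ∈ range (n + 2), a k = ∑ k ∈ range (n + 1), a (k + 1) + a 0 :=
    fun n => sum_range_succ' a (n + 1)
  rw [sum_range_succ', sum_congr rfl fun n _ => partialSum_succ n, sum_add_distrib]
  simp only [sum_const, card_range, nsmul_eq_mul, zero_add, range_one, sum_singleton]
  push_cast
  ring

lemma cesaroMeanPartialSums_succ_sub (a : ℕ → ℝ) (N : ℕ) :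
    cesaroMeanPartialSums a (N + 1) - a 0
      = (N + 1) / (N + 2) * cesaroMeanPartialSums (fun k => a (k + 1)) N := by
  unfold cesaroMeanPartialSums
  rw [sum_partialSums_succ_eq]
  push_cast
  field_simp
  ring

lemma tendsto_cesaroMeanPartialSums_shift_iff (a : ℕ → ℝ) (L : ℝ) :
    Tendsto (cesaroMeanPartialSums fun k => a (k + 1)) atTop (𝓝 L)
      ↔ Tendsto (cesaroMeanPartialSums a) atTop (𝓝 (L + a 0)) := by
  have ratio_tendsto_one : Tendsto (fun N : ℕ => ((N : ℝ) + 1) / (N + 2)) atTop (𝓝 1) := by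
    have := (tendsto_natCast_div_add_atTop (1 : ℝ)).comp (tendsto_add_atTop_nat 1)
    refine this.congr fun N => ?_
    push_cast [Function.comp]
    ring
  have equiv : (fun N => cesaroMeanPartialSums a (N + 1) - a 0)
      ~[atTop] cesaroMeanPartialSums fun k => a (k + 1) :=
    isEquivalent_iff_exists_eq_mul.mpr
      ⟨_, ratio_tendsto_one, .of_eq (funext (cesaroMeanPartialSums_succ_sub a))⟩
  rw [← equiv.tendsto_nhds_iff, ← tendsto_add_atTop_iff_nat 1 (f := cesaroMeanPartialSums a)]
  simpa using
    tendsto_sub_const_iff (a 0) (c := L + a 0) (f := fun N => cesaroMeanPartialSums a (N + 1))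

/-- Let `s_n(x) = ∑_{k=0}^{n} γ(F^k x)` and let
`σ_N(x) = (1/(N+1)) ∑_{n=0}^{N} s_n(x)` be the Cesàro means of the resolving series.
The set `C_γ` of points where the Cesàro limit `σ(x)` exists is completely invariant,
and `−σ` satisfies the cohomological equation on `C_γ`. -/
theorem cesaro_sum_solves_cohomological_equation
    {X : Type*} (F : X → X) (γ : X → ℝ)
    (s : ℕ → X → ℝ)
    (hs : ∀ n x, s n x = ∑ k ∈ Finset.range (n + 1), γ (F^[k] x))
    (σN : ℕ → X → ℝ)
    (hσN : ∀ N x, σN N x = (∑ n ∈ Finset.range (N + 1), s n x) / (N + 1))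
    (Cγ : Set X)
    (hCγ : ∀ x, x ∈ Cγ ↔ ∃ L : ℝ, Tendsto (fun N => σN N x) atTop (nhds L))
    (σ : X → ℝ)
    (hσ : ∀ x ∈ Cγ, Tendsto (fun N => σN N x) atTop (nhds (σ x))) :
    (∀ x : X, x ∈ Cγ ↔ F x ∈ Cγ) ∧
    (∀ x ∈ Cγ, (-σ (F x)) - (-σ x) = γ x) := by
  have σN_eq x : (fun N => σN N x) = cesaroMeanPartialSums fun k => γ (F^[k] x) := by
    funext N
    simp only [hσN, hs, cesaroMeanPartialSums]
  have tendsto_apply_iff x L : Tendsto (fun N => σN N (F x)) atTop (𝓝 L)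
      ↔ Tendsto (fun N => σN N x) atTop (𝓝 (L + γ x)) := by
    simp only [σN_eq, ← Function.iterate_succ_apply]
    exact tendsto_cesaroMeanPartialSums_shift_iff (fun k => γ (F^[k] x)) L
  have mem_iff x : x ∈ Cγ ↔ F x ∈ Cγ := by
    rw [hCγ, hCγ]
    constructor
    · rintro ⟨L, hL⟩
      exact ⟨L - γ x, (tendsto_apply_iff x _).mpr (by rwa [sub_add_cancel])⟩
    · rintro ⟨L, hL⟩
      exact ⟨L + γ x, (tendsto_apply_iff x L).mp hL⟩
  refine ⟨mem_iff, fun x hx => ?_⟩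
  have limits_eq :=
    tendsto_nhds_unique ((tendsto_apply_iff x _).mp (hσ (F x) ((mem_iff x).mp hx))) (hσ x hx)
  linarith
end

section
/- Let X be a nonempty set, F : X → X preperiodic with F^{l+p} = F^{l} for some integers l ≥ 0 and p ≥ 1, and γ : X → ℝ. Then the cohomological equation φ(F x) − φ(x) = γ(x) has a solution φ : X → ℝ if and only if ∑_{k=0}^{p−1} γ(F^{k+l} x) = 0 for all x ∈ X. Under this condition, an explicit solution is φ(x) = −∑_{k=0}^{l−1} γ(F^k x) + (1/p) ∑_{k=1}^{p−1} k·γ(F^{k+l} x). -/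
/-!
Write `S_n g x = ∑_{k<n} g (F^k x)` for Birkhoff sums and `ψ = γ ∘ F^l`, which satisfies
`ψ ∘ F^p = ψ`. If `γ = φ ∘ F - φ`, the Birkhoff sums of `γ` telescope, so
`S_p ψ x = φ (F^(p+l) x) - φ (F^l x) = 0`. Conversely, `S_l γ` corrects `γ` up to the periodic
part: `S_l γ (F x) - S_l γ x = ψ x - γ x`, and the weighted sum `W y = ∑_{k<p} k ψ (F^k y)`
satisfies `W (F x) - W x = p ψ (F^p x) - S_p ψ (F x) = p ψ x` once `S_p ψ` vanishes.
Hence `φ = -S_l γ + W / p` solves the equation.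
-/

open Finset Function

section AddCommMonoid

variable {X M : Type*} [AddCommMonoid M]

theorem birkhoffSum_comp_iterate (F : X → X) (g : X → M) (m n : ℕ) (x : X) :
    birkhoffSum F (g ∘ F^[m]) n x = birkhoffSum F g n (F^[m] x) := by
  simp only [birkhoffSum, comp_apply, ← iterate_add_apply, add_comm m]

def weightedBirkhoffSum (F : X → X) (g : X → M) (n : ℕ) (x : X) : M :=
  ∑ k ∈ range n, k • g (F^[k] x)

end AddCommMonoid

section AddCommGroup

variable {X G : Type*} [AddCommGroup G]

theorem birkhoffSum_eq_sub_of_cohomologous {F : X → X} {φ γ : X → G}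
    (h : ∀ x, φ (F x) - φ x = γ x) (n : ℕ) (x : X) :
    birkhoffSum F γ n x = φ (F^[n] x) - φ x := by
  simp only [birkhoffSum, ← h, ← iterate_succ_apply' F]
  exact sum_range_sub (fun k => φ (F^[k] x)) n

theorem birkhoffSum_comp_iterate_eq_zero_of_cohomologous {F : X → X} {l p : ℕ}
    (hF : F^[l + p] = F^[l]) {φ γ : X → G} (h : ∀ x, φ (F x) - φ x = γ x) (x : X) :
    birkhoffSum F (γ ∘ F^[l]) p x = 0 := by
  rw [birkhoffSum_comp_iterate, birkhoffSum_eq_sub_of_cohomologous h, ← iterate_add_apply,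
    add_comm, hF, sub_self]

theorem weightedBirkhoffSum_apply_sub_weightedBirkhoffSum (F : X → X) (g : X → G) (n : ℕ)
    (x : X) :
    weightedBirkhoffSum F g n (F x) - weightedBirkhoffSum F g n x =
      n • g (F^[n] x) - birkhoffSum F g n (F x) := by
  induction n with
  | zero => simp [weightedBirkhoffSum]
  | succ n ih =>
    simp only [weightedBirkhoffSum, sum_range_succ] at ih ⊢
    rw [sub_eq_iff_eq_add] at ih
    rw [birkhoffSum_succ, ← iterate_succ_apply, iterate_succ_apply', ih, succ_nsmul]
    abel

theorem weightedBirkhoffSum_apply_sub_of_periodic {F : X → X} {g : X → G} {n : ℕ}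
    (hg : g ∘ F^[n] = g) (x : X) (hx : birkhoffSum F g n (F x) = 0) :
    weightedBirkhoffSum F g n (F x) - weightedBirkhoffSum F g n x = n • g x := by
  rw [weightedBirkhoffSum_apply_sub_weightedBirkhoffSum, hx, sub_zero,
    ← comp_apply (f := g), hg]

end AddCommGroup

section Preperiodic

variable {X K : Type*} [Field K] {F : X → X} {l p : ℕ}

def preperiodicSolution (F : X → X) (l p : ℕ) (γ : X → K) (x : X) : K :=
  -birkhoffSum F γ l x + (p : K)⁻¹ * weightedBirkhoffSum F (γ ∘ F^[l]) p x

theorem preperiodicSolution_apply_sub [CharZero K] (hF : F^[l + p] = F^[l]) (hp : p ≠ 0)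
    {γ : X → K} (h : ∀ x, birkhoffSum F (γ ∘ F^[l]) p x = 0) (x : X) :
    preperiodicSolution F l p γ (F x) - preperiodicSolution F l p γ x = γ x := by
  have hperiodic : (γ ∘ F^[l]) ∘ F^[p] = γ ∘ F^[l] := by
    rw [comp_assoc, ← iterate_add, hF]
  have hweighted := weightedBirkhoffSum_apply_sub_of_periodic hperiodic x (h (F x))
  have hbirkhoff := birkhoffSum_apply_sub_birkhoffSum F γ l x
  have hp' : (p : K) ≠ 0 := Nat.cast_ne_zero.mpr hp
  rw [nsmul_eq_mul, comp_apply] at hweighted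
  simp only [preperiodicSolution]
  field_simp
  linear_combination hweighted - (p : K) * hbirkhoff

end Preperiodic

theorem cohomological_preperiodic_general
    {X : Type*} (F : X → X) (l p : ℕ) (hp : 1 ≤ p)
    (hF : F^[l + p] = F^[l]) (γ : X → ℝ) :
    ((∃ φ : X → ℝ, ∀ x, φ (F x) - φ x = γ x) ↔
      ∀ x : X, ∑ k ∈ Finset.range p, γ (F^[k + l] x) = 0) ∧
    ((∀ x : X, ∑ k ∈ Finset.range p, γ (F^[k + l] x) = 0) →
      ∀ x : X,
        (fun y : X => -(∑ k ∈ Finset.range l, γ (F^[k] y)) +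
          (1 / (p : ℝ)) * ∑ k ∈ Finset.range p, (k : ℝ) * γ (F^[k + l] y)) (F x) -
        (fun y : X => -(∑ k ∈ Finset.range l, γ (F^[k] y)) +
          (1 / (p : ℝ)) * ∑ k ∈ Finset.range p, (k : ℝ) * γ (F^[k + l] y)) x = γ x) := by
  have hsum : ∀ x, ∑ k ∈ range p, γ (F^[k + l] x) = birkhoffSum F (γ ∘ F^[l]) p x := by
    simp only [birkhoffSum, comp_apply, ← iterate_add_apply, add_comm l, implies_true]
  have hsolution : ∀ y, -(∑ k ∈ Finset.range l, γ (F^[k] y)) +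
      (1 / (p : ℝ)) * ∑ k ∈ Finset.range p, (k : ℝ) * γ (F^[k + l] y) =
      preperiodicSolution F l p γ y := by
    simp only [preperiodicSolution, birkhoffSum, weightedBirkhoffSum, comp_apply,
      ← iterate_add_apply, add_comm l, one_div, nsmul_eq_mul, implies_true]
  simp only [hsum, hsolution]
  have hsolves := preperiodicSolution_apply_sub hF (by omega) (γ := γ)
  exact ⟨⟨fun ⟨φ, hφ⟩ => birkhoffSum_comp_iterate_eq_zero_of_cohomologous hF hφ,
    fun h => ⟨_, hsolves h⟩⟩, hsolves⟩

/-- For a preperiodic map `F` with `F^{l+p} = F^{l}` (`l ≥ 0`, `p ≥ 1`),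
the cohomological equation `φ(F x) − φ(x) = γ(x)` is solvable iff
`∑_{k=0}^{p−1} γ(F^{k+l} x) = 0` for all `x`; under this condition an explicit solution is
`φ(x) = −∑_{k=0}^{l−1} γ(F^k x) + (1/p) ∑_{k=1}^{p−1} k·γ(F^{k+l} x)`. -/
theorem cohomological_preperiodic
    {X : Type*} [Nonempty X] (F : X → X) (l p : ℕ) (hp : 1 ≤ p)
    (hF : F^[l + p] = F^[l]) (γ : X → ℝ) :
    ((∃ φ : X → ℝ, ∀ x, φ (F x) - φ x = γ x) ↔
      ∀ x : X, ∑ k ∈ Finset.range p, γ (F^[k + l] x) = 0) ∧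
    ((∀ x : X, ∑ k ∈ Finset.range p, γ (F^[k + l] x) = 0) →
      ∀ x : X,
        (fun y : X => -(∑ k ∈ Finset.range l, γ (F^[k] y)) +
          (1 / (p : ℝ)) * ∑ k ∈ Finset.range p, (k : ℝ) * γ (F^[k + l] y)) (F x) -
        (fun y : X => -(∑ k ∈ Finset.range l, γ (F^[k] y)) +
          (1 / (p : ℝ)) * ∑ k ∈ Finset.range p, (k : ℝ) * γ (F^[k + l] y)) x = γ x) :=
  cohomological_preperiodic_general F l p hp hF γ
end

section
/- Let X be a set, F : X → X a map, γ : X → ℝ, and s_n(x) = ∑_{k=0}^{n} γ(F^k x). Let Λ be a set of real sequences (η_n)_{n≥0} containing all sequences (−s_n(x))_{n≥0}, x ∈ X, such that Λ is invariant under the shift (η_n) ↦ (η_{n+1}) and under all translations (η_n) ↦ (η_n + c) for c ∈ ℝ. Let ω : Λ → ℝ satisfy ω[(η_{n+1})] = ω[(η_n)] and ω[(η_n + c)] = ω[(η_n)] + c for all sequences in Λ and c ∈ ℝ. Then φ(x) = ω[(−s_n(x))_{n≥0}] satisfies the cohomological equation φ(F x) − φ(x) = γ(x) for all x ∈ X.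 -/
/-!
Writing `η = (−s_n(x))_n`, the sequence `(−s_n(F x))_n` is the shift of `η` translated by `γ x`,
since `s_{n+1}(x) = γ x + s_n(F x)`. Shift invariance and translation covariance of `ω` then give
`φ(F x) = ω η + γ x = φ(x) + γ x`.
-/

theorem map_shift_add_eq_add {G : Type*} [Add G] {Λ : Set (ℕ → G)} {ω : (ℕ → G) → G}
    (hΛshift : ∀ η ∈ Λ, (fun n => η (n + 1)) ∈ Λ)
    (hωshift : ∀ η ∈ Λ, ω (fun n => η (n + 1)) = ω η)
    (hωtrans : ∀ η ∈ Λ, ∀ c : G, ω (fun n => η n + c) = ω η + c)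
    {η : ℕ → G} (hη : η ∈ Λ) (c : G) :
    ω (fun n => η (n + 1) + c) = ω η + c := by
  rw [hωtrans _ (hΛshift η hη), hωshift η hη]

theorem resolving_functional_solves_general
    {X : Type*} (F : X → X) (γ : X → ℝ)
    (Λ : Set (ℕ → ℝ))
    (hΛmem : ∀ x : X, (fun n => -(∑ k ∈ Finset.range (n + 1), γ (F^[k] x))) ∈ Λ)
    (hΛshift : ∀ η ∈ Λ, (fun n => η (n + 1)) ∈ Λ)
    (ω : (ℕ → ℝ) → ℝ)
    (hωshift : ∀ η ∈ Λ, ω (fun n => η (n + 1)) = ω η)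
    (hωtrans : ∀ η ∈ Λ, ∀ c : ℝ, ω (fun n => η n + c) = ω η + c) :
    ∀ x : X,
      ω (fun n => -(∑ k ∈ Finset.range (n + 1), γ (F^[k] (F x)))) -
      ω (fun n => -(∑ k ∈ Finset.range (n + 1), γ (F^[k] x))) = γ x := by
  intro x
  change ω (fun n => -birkhoffSum F γ (n + 1) (F x)) - ω (fun n => -birkhoffSum F γ (n + 1) x) = γ x
  have hshift : (fun n => -birkhoffSum F γ (n + 1) (F x))
      = fun n => -birkhoffSum F γ (n + 1 + 1) x + γ x := by
    funext n
    rw [birkhoffSum_succ' F γ (n + 1) x]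
    abel
  rw [hshift, sub_eq_iff_eq_add']
  exact map_shift_add_eq_add hΛshift hωshift hωtrans (hΛmem x) (γ x)

/-- A resolving functional yields a solution of the cohomological equation:
if `Λ` is a set of real sequences containing all `(−s_n(x))`, invariant under the shift
and under translations, and `ω` is shift invariant and translation covariant on `Λ`,
then `φ(x) = ω[(−s_n(x))]` solves `φ(F x) − φ(x) = γ(x)`. -/
theorem resolving_functional_solves
    {X : Type*} (F : X → X) (γ : X → ℝ)
    (Λ : Set (ℕ → ℝ))
    (hΛmem : ∀ x : X, (fun n => -(∑ k ∈ Finset.range (n + 1), γ (F^[k] x))) ∈ Λ)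
    (hΛshift : ∀ η ∈ Λ, (fun n => η (n + 1)) ∈ Λ)
    (hΛtrans : ∀ η ∈ Λ, ∀ c : ℝ, (fun n => η n + c) ∈ Λ)
    (ω : (ℕ → ℝ) → ℝ)
    (hωshift : ∀ η ∈ Λ, ω (fun n => η (n + 1)) = ω η)
    (hωtrans : ∀ η ∈ Λ, ∀ c : ℝ, ω (fun n => η n + c) = ω η + c) :
    ∀ x : X,
      ω (fun n => -(∑ k ∈ Finset.range (n + 1), γ (F^[k] (F x)))) -
      ω (fun n => -(∑ k ∈ Finset.range (n + 1), γ (F^[k] x))) = γ x :=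
  resolving_functional_solves_general F γ Λ hΛmem hΛshift ω hωshift hωtrans
end

section
/- Let X be a set, F : X → X a map, γ : X → ℝ, and s_n(x) = ∑_{k=0}^{n} γ(F^k x). Assume C = sup_{n,x} |s_n(x)| < ∞ and set φ(x) = sup_n (−s_n(x)) and δ(x) = γ(x) + φ(x) − φ(F x). Then: (1) δ(x) ≥ 0 for all x ∈ X; (2) for every x ∈ X and every n, ∑_{k=0}^{n} δ(F^k x) ≤ 3C, so the series ∑_{k≥0} δ(F^k x) converges to a bounded nonnegative function Δ(x) with 0 ≤ Δ(x) ≤ 3C. -/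
/-- If `C = sup_{n,x} |s_n(x)| < ∞`, `φ(x) = sup_n (−s_n(x))` and
`δ(x) = γ(x) + φ(x) − φ(F x)`, then `δ ≥ 0`, the partial sums of `∑_k δ(F^k x)` are
bounded by `3C`, and the series converges to a function `Δ` with `0 ≤ Δ ≤ 3C`. -/
theorem residual_function_nonneg_and_summable
    {X : Type*} (F : X → X) (γ : X → ℝ) (C : ℝ)
    (hC : ∀ (n : ℕ) (x : X), |∑ k ∈ Finset.range (n + 1), γ (F^[k] x)| ≤ C)
    (φ : X → ℝ)
    (hφ : ∀ x, φ x = ⨆ n : ℕ, -(∑ k ∈ Finset.range (n + 1), γ (F^[k] x)))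
    (δ : X → ℝ)
    (hδ : ∀ x, δ x = γ x + φ x - φ (F x)) :
    (∀ x, 0 ≤ δ x) ∧
    (∀ (x : X) (n : ℕ), ∑ k ∈ Finset.range (n + 1), δ (F^[k] x) ≤ 3 * C) ∧
    (∃ Δ : X → ℝ, ∀ x, HasSum (fun k : ℕ => δ (F^[k] x)) (Δ x) ∧
      0 ≤ Δ x ∧ Δ x ≤ 3 * C) := by
  set s : ℕ → X → ℝ := fun n x => ∑ k ∈ Finset.range (n + 1), γ (F^[k] x) with hs
  have hbdd : ∀ x : X, BddAbove (Set.range fun n : ℕ => -(s n x)) := by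
    intro x
    exact ⟨C, by rintro _ ⟨n, rfl⟩; exact (neg_le_abs _).trans (hC n x)⟩
  have hφle : ∀ x, φ x ≤ C := by
    intro x
    rw [hφ x]
    exact ciSup_le fun n => (neg_le_abs _).trans (hC n x)
  have hφge : ∀ x, -C ≤ φ x := by
    intro x
    rw [hφ x]
    refine le_trans ?_ (le_ciSup (hbdd x) 0)
    simp only [neg_le_neg_iff]
    exact (le_abs_self _).trans (hC 0 x)
  have hsucc : ∀ (n : ℕ) (x : X), s (n + 1) x = γ x + s n (F x) := by
    intro n x
    rw [hs]
    simp only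
    rw [Finset.sum_range_succ'] 
    simp [Function.iterate_succ_apply, add_comm]
  have hδnn : ∀ x, 0 ≤ δ x := by
    intro x
    rw [hδ x, sub_nonneg, hφ (F x)]
    refine ciSup_le fun n => ?_
    have h1 : -(s (n + 1) x) ≤ φ x := hφ x ▸ le_ciSup (hbdd x) (n + 1)
    have := hsucc n x
    nlinarith [h1]
  have htel : ∀ (x : X) (n : ℕ),
      ∑ k ∈ Finset.range (n + 1), δ (F^[k] x) = s n x + φ x - φ (F^[n+1] x) := by
    intro x n
    have : ∀ k, δ (F^[k] x) = γ (F^[k] x) + (φ (F^[k] x) - φ (F^[k+1] x)) := by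
      intro k
      rw [hδ, Function.iterate_succ_apply']
      ring
    simp only [this, Finset.sum_add_distrib, Finset.sum_range_sub' (fun k => φ (F^[k] x))]
    simp [hs]
    ring
  have hpart : ∀ (x : X) (n : ℕ), ∑ k ∈ Finset.range (n + 1), δ (F^[k] x) ≤ 3 * C := by
    intro x n
    rw [htel x n]
    have h1 : s n x ≤ C := (le_abs_self _).trans (hC n x)
    have h2 := hφle x
    have h3 := hφge (F^[n+1] x)
    linarith
  refine ⟨hδnn, hpart, ?_⟩
  refine ⟨fun x => ∑' k : ℕ, δ (F^[k] x), fun x => ?_⟩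
  have hCnn : 0 ≤ C := (abs_nonneg _).trans (hC 0 x)
  have hrange : ∀ n : ℕ, ∑ k ∈ Finset.range n, δ (F^[k] x) ≤ 3 * C := by
    intro n
    cases n with
    | zero => simp; linarith
    | succ m => exact hpart x m
  have hsumm : Summable fun k : ℕ => δ (F^[k] x) :=
    summable_of_sum_range_le (fun k => hδnn _) hrange
  exact ⟨hsumm.hasSum, tsum_nonneg fun k => hδnn _,
    Summable.tsum_le_of_sum_range_le hsumm hrange⟩
end

section
/- Let X be a set, F : X → X a map, γ : X → ℝ, and s_n(x) = ∑_{k=0}^{n} γ(F^k x). Assume the sums s_n are uniformly bounded: sup_{n,x} |s_n(x)| < ∞. Define d_N(x) = sup_n (−s_n(F^{N+1} x)) − s_N(x). Then for every x ∈ X the sequence (d_N(x))_{N≥0} is non-increasing and converges as N → ∞ to a function ψ(x) that satisfies the cohomological equation ψ(F x) − ψ(x) = γ(x) for all x ∈ X. -/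
/-!
Writing `s_n(x) = birkhoffSum F γ (n + 1) x`, the cocycle identity
`s_n(F^{N+1} x) = s_{n+N+1}(x) - s_N(x)` turns `d_N(x)` into the tail supremum
`sup_{m > N} (-s_m(x))` of a bounded sequence, which is non-increasing and bounded below, hence
convergent. The identity `s_m(F x) = s_{m+1}(x) - γ(x)` gives `d_N(F x) = d_{N+1}(x) + γ(x)`,
and passing to the limit yields the cohomological equation.
-/

open Filter Set Topology

section TailSup

theorem bddAbove_range_add {α : Type*} [Preorder α] {u : ℕ → α} (hu : BddAbove (range u))
    (N : ℕ) : BddAbove (range fun n => u (n + N)) :=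
  hu.mono (range_comp_subset_range (· + N) u)

variable {u : ℕ → ℝ}

theorem antitone_iSup_add (hu : BddAbove (range u)) : Antitone fun N => ⨆ n, u (n + N) := by
  refine antitone_nat_of_succ_le fun N => ciSup_le fun n => ?_
  rw [← add_assoc, add_right_comm]
  exact le_ciSup (bddAbove_range_add hu N) (n + 1)

theorem tendsto_iSup_add (hu : BddAbove (range u)) (hu' : BddBelow (range u)) :
    Tendsto (fun N => ⨆ n, u (n + N)) atTop (𝓝 (⨅ N, ⨆ n, u (n + N))) := by
  obtain ⟨b, hb⟩ := hu'
  refine tendsto_atTop_ciInf (antitone_iSup_add hu) ⟨b, ?_⟩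
  rintro _ ⟨N, rfl⟩
  exact (hb (mem_range_self (0 + N))).trans (le_ciSup (bddAbove_range_add hu N) 0)

theorem iInf_iSup_add_eq_of_succ_add_const {v : ℕ → ℝ} {c : ℝ} (hu : BddAbove (range u))
    (hu' : BddBelow (range u)) (hv : ∀ n, v n = u (n + 1) + c) :
    ⨅ N, ⨆ n, v (n + N) = (⨅ N, ⨆ n, u (n + N)) + c := by
  have hshift : (fun N => ⨆ n, v (n + N)) = fun N => (⨆ n, u (n + (N + 1))) + c := by
    ext N
    rw [ciSup_add (bddAbove_range_add hu _)]
    simp only [hv]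
    rfl
  have hvu := ((tendsto_iSup_add hu hu').comp (tendsto_add_atTop_nat 1)).add_const c
  have hv_bdd : BddAbove (range v) := by
    obtain ⟨b, hb⟩ := hu
    exact ⟨b + c, by rintro _ ⟨n, rfl⟩; simpa [hv] using hb (mem_range_self (n + 1))⟩
  have hv_bdd' : BddBelow (range v) := by
    obtain ⟨b, hb⟩ := hu'
    exact ⟨b + c, by rintro _ ⟨n, rfl⟩; simpa [hv] using hb (mem_range_self (n + 1))⟩
  refine tendsto_nhds_unique (tendsto_iSup_add hv_bdd hv_bdd') ?_
  rw [hshift]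
  exact hvu

end TailSup

section Birkhoff

variable {X G : Type*} [AddCommGroup G] (F : X → X) (γ : X → G)

theorem neg_birkhoffSum_iterate_sub_birkhoffSum (N n : ℕ) (x : X) :
    -birkhoffSum F γ (n + 1) (F^[N + 1] x) - birkhoffSum F γ (N + 1) x =
      -birkhoffSum F γ (n + (N + 1) + 1) x := by
  rw [show n + (N + 1) + 1 = (N + 1) + (n + 1) by omega, birkhoffSum_add F γ (N + 1) (n + 1)]
  abel

theorem neg_birkhoffSum_succ_apply (m : ℕ) (x : X) :
    -birkhoffSum F γ (m + 1) (F x) = -birkhoffSum F γ (m + 1 + 1) x + γ x := by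
  rw [birkhoffSum_succ' F γ (m + 1)]
  abel

end Birkhoff

/-- If the sums `s_n(x)` are uniformly bounded and
`d_N(x) = sup_n (−s_n(F^{N+1} x)) − s_N(x)`, then for each `x` the sequence `(d_N(x))`
is non-increasing and converges to a function `ψ` solving the cohomological equation. -/
theorem regularization_tends_to_solution
    {X : Type*} (F : X → X) (γ : X → ℝ)
    (hbdd : ∃ C : ℝ, ∀ (n : ℕ) (x : X), |∑ k ∈ Finset.range (n + 1), γ (F^[k] x)| ≤ C)
    (d : ℕ → X → ℝ)
    (hd : ∀ N x, d N x =
      (⨆ n : ℕ, -(∑ k ∈ Finset.range (n + 1), γ (F^[k] (F^[N + 1] x)))) -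
        ∑ k ∈ Finset.range (N + 1), γ (F^[k] x)) :
    (∀ x : X, Antitone fun N => d N x) ∧
    (∃ ψ : X → ℝ, (∀ x : X, Tendsto (fun N => d N x) atTop (nhds (ψ x))) ∧
      ∀ x : X, ψ (F x) - ψ x = γ x) := by
  obtain ⟨C, hC⟩ := hbdd
  have hs_bdd (x : X) : BddAbove (range fun m => -birkhoffSum F γ (m + 1) x) :=
    ⟨C, by rintro _ ⟨m, rfl⟩; exact neg_le.mpr (abs_le.mp (hC m x)).1⟩
  have hs_bdd' (x : X) : BddBelow (range fun m => -birkhoffSum F γ (m + 1) x) :=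
    ⟨-C, by rintro _ ⟨m, rfl⟩; exact neg_le_neg (abs_le.mp (hC m x)).2⟩
  have hd_tail (N : ℕ) (x : X) : d N x = ⨆ n, -birkhoffSum F γ (n + (N + 1) + 1) x := by
    rw [hd]
    refine (ciSup_sub (bddAbove_range_add (hs_bdd (F^[N + 1] x)) 0) _).trans ?_
    exact congrArg iSup (funext fun n => neg_birkhoffSum_iterate_sub_birkhoffSum F γ N n x)
  refine ⟨fun x => ?_, fun x => ⨅ N, ⨆ n, -birkhoffSum F γ (n + N + 1) x, fun x => ?_, fun x => ?_⟩
  · simp only [hd_tail]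
    exact (antitone_iSup_add (hs_bdd x)).comp_monotone fun _ _ h => Nat.add_le_add_right h 1
  · simp only [hd_tail]
    exact (tendsto_iSup_add (hs_bdd x) (hs_bdd' x)).comp (tendsto_add_atTop_nat 1)
  · dsimp only
    rw [iInf_iSup_add_eq_of_succ_add_const (hs_bdd x) (hs_bdd' x)
      (neg_birkhoffSum_succ_apply F γ · x)]
    ring
end

section
/- Let (X, μ) be a measurable space with a finite measure μ, F : X → X a measurable map with μ invariant (μ(F⁻¹ M) = μ(M) for every measurable M), and γ : X → ℝ a measurable function such that the sums s_n(x) = ∑_{k=0}^{n} γ(F^k x) are uniformly bounded: sup_{n,x} |s_n(x)| < ∞. Then φ(x) = sup_n (−s_n(x)) is a bounded measurable function satisfying φ(F x) − φ(x) = γ(x) for μ-almost every x ∈ X. -/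
/-!
Shifting the index in the Birkhoff sums gives `φ (F x) = γ x + sup_{n ≥ 1} (-s_n x) ≤ γ x + φ x`.
Integrating against the invariant measure, `∫ s_n = (n + 1) ∫ γ` stays bounded, so `∫ γ = 0`.
Hence `φ ∘ F - φ ≤ γ` and both sides have the same integral, which forces equality almost
everywhere.
-/

open MeasureTheory Set

namespace MeasureTheory.MeasurePreserving

variable {X Y G : Type*} [MeasurableSpace X] [MeasurableSpace Y] {μ : Measure X} {ν : Measure Y}
  [NormedAddCommGroup G] [NormedSpace ℝ G]

theorem integral_comp_of_aestronglyMeasurable {f : X → Y} (hf : MeasurePreserving f μ ν)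
    {g : Y → G} (hg : AEStronglyMeasurable g ν) :
    ∫ x, g (f x) ∂μ = ∫ y, g y ∂ν := by
  rw [← hf.map_eq] at hg ⊢
  exact (integral_map hf.aemeasurable hg).symm

variable {F : X → X}

theorem integral_birkhoffSum {g : X → G} (hF : MeasurePreserving F μ μ) (hg : Integrable g μ)
    (n : ℕ) : ∫ x, birkhoffSum F g n x ∂μ = n • ∫ x, g x ∂μ := by
  have hcomp (k : ℕ) : ∫ x, g (F^[k] x) ∂μ = ∫ x, g x ∂μ :=
    (hF.iterate k).integral_comp_of_aestronglyMeasurable hg.aestronglyMeasurable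
  unfold birkhoffSum
  rw [integral_finsetSum (f := fun k x => g (F^[k] x)) _ fun k _ =>
    (hF.iterate k).integrable_comp_of_integrable hg]
  simp [hcomp]

theorem integral_eq_zero_of_abs_birkhoffSum_le [IsFiniteMeasure μ] {g : X → ℝ}
    (hF : MeasurePreserving F μ μ) (hg : Integrable g μ) {C : ℝ} (hC : ∀ n x, |birkhoffSum F g (n + 1) x| ≤ C) :
    ∫ x, g x ∂μ = 0 := by
  set K := C * μ.real univ
  have hbound (n : ℕ) : (n + 1) * |∫ x, g x ∂μ| ≤ K := by
    have := norm_integral_le_of_norm_le_const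
      (ae_of_all μ fun x => (Real.norm_eq_abs _).le.trans (hC n x))
    rwa [Real.norm_eq_abs, integral_birkhoffSum hF hg, nsmul_eq_mul, abs_mul, Nat.cast_succ,
      abs_of_pos (Nat.cast_add_one_pos n)] at this
  by_contra hne
  have hpos : 0 < |∫ x, g x ∂μ| := abs_pos.2 hne
  obtain ⟨n, hn⟩ := exists_nat_gt (K / |∫ x, g x ∂μ|)
  rw [div_lt_iff₀ hpos] at hn
  nlinarith [hbound n]

end MeasureTheory.MeasurePreserving

section SupNegBirkhoffSum

variable {X : Type*} {F : X → X} {g : X → ℝ} {C : ℝ}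

/-- The paper's `s_n = ∑_{k=0}^{n} g (F^[k] x)` is `birkhoffSum F g (n + 1)`. -/
noncomputable def supNegBirkhoffSum (F : X → X) (g : X → ℝ) (x : X) : ℝ :=
  ⨆ n : ℕ, -birkhoffSum F g (n + 1) x

theorem bddAbove_range_neg_birkhoffSum (hC : ∀ n x, |birkhoffSum F g (n + 1) x| ≤ C) (x : X) :
    BddAbove (range fun n : ℕ => -birkhoffSum F g (n + 1) x) :=
  ⟨C, by rintro _ ⟨n, rfl⟩; exact (neg_le_abs _).trans (hC n x)⟩

theorem abs_supNegBirkhoffSum_le (hC : ∀ n x, |birkhoffSum F g (n + 1) x| ≤ C) (x : X) :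
    |supNegBirkhoffSum F g x| ≤ C := by
  refine abs_le.2 ⟨?_, ciSup_le fun n => (neg_le_abs _).trans (hC n x)⟩
  calc -C ≤ -birkhoffSum F g 1 x := neg_le_neg (le_of_abs_le (hC 0 x))
    _ ≤ supNegBirkhoffSum F g x := le_ciSup (bddAbove_range_neg_birkhoffSum hC x) 0

theorem measurable_supNegBirkhoffSum [MeasurableSpace X] (hF : Measurable F) (hg : Measurable g) :
    Measurable (supNegBirkhoffSum F g) :=
  .iSup fun _ => (Finset.measurable_sum _ fun k _ => hg.comp (hF.iterate k)).neg

theorem supNegBirkhoffSum_apply_le (hC : ∀ n x, |birkhoffSum F g (n + 1) x| ≤ C) (x : X) :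
    supNegBirkhoffSum F g (F x) ≤ g x + supNegBirkhoffSum F g x :=
  ciSup_le fun n => by
    have hshift := birkhoffSum_succ' F g (n + 1) x
    have hle : -birkhoffSum F g (n + 1 + 1) x ≤ supNegBirkhoffSum F g x :=
      le_ciSup (bddAbove_range_neg_birkhoffSum hC x) (n + 1)
    linarith

theorem ae_supNegBirkhoffSum_apply_sub_eq [MeasurableSpace X] {μ : Measure X} [IsFiniteMeasure μ]
    (hF : MeasurePreserving F μ μ) (hg : Measurable g)
    (hC : ∀ n x, |birkhoffSum F g (n + 1) x| ≤ C) :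
    ∀ᵐ x ∂μ, supNegBirkhoffSum F g (F x) - supNegBirkhoffSum F g x = g x := by
  set φ := supNegBirkhoffSum F g
  have hφm : Measurable φ := measurable_supNegBirkhoffSum hF.measurable hg
  have hφ : Integrable φ μ := .of_bound hφm.aestronglyMeasurable C
    (ae_of_all μ (abs_supNegBirkhoffSum_le hC))
  have hgi : Integrable g μ := .of_bound hg.aestronglyMeasurable C
    (ae_of_all μ fun x => by simpa using hC 0 x)
  have hφF : Integrable (fun x => φ (F x)) μ := hF.integrable_comp_of_integrable hφ
  have hintegral : ∫ x, φ (F x) - φ x ∂μ = ∫ x, g x ∂μ := by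
    rw [integral_sub hφF hφ,
      hF.integral_comp_of_aestronglyMeasurable hφm.aestronglyMeasurable, sub_self,
      hF.integral_eq_zero_of_abs_birkhoffSum_le hgi hC]
  exact (integral_eq_iff_of_ae_le (hφF.sub hφ) hgi
    (ae_of_all μ fun x => sub_le_iff_le_add.2 (supNegBirkhoffSum_apply_le hC x))).1 hintegral

end SupNegBirkhoffSum

/-- For a finite invariant measure `μ`, a measurable `F` and a measurable
`γ` with uniformly bounded sums `s_n`, the function `φ(x) = sup_n (−s_n(x))` is a bounded
measurable solution of the cohomological equation almost everywhere. -/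
theorem sup_is_ae_solution
    {X : Type*} [MeasurableSpace X] (μ : Measure X) [IsFiniteMeasure μ]
    (F : X → X) (hF : Measurable F)
    (hinv : ∀ M : Set X, MeasurableSet M → μ (F ⁻¹' M) = μ M)
    (γ : X → ℝ) (hγ : Measurable γ)
    (hbdd : ∃ C : ℝ, ∀ (n : ℕ) (x : X), |∑ k ∈ Finset.range (n + 1), γ (F^[k] x)| ≤ C)
    (φ : X → ℝ)
    (hφ : ∀ x, φ x = ⨆ n : ℕ, -(∑ k ∈ Finset.range (n + 1), γ (F^[k] x))) :
    Measurable φ ∧ (∃ C : ℝ, ∀ x, |φ x| ≤ C) ∧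
    ∀ᵐ x ∂μ, φ (F x) - φ x = γ x := by
  obtain ⟨C, hC⟩ := hbdd
  obtain rfl : φ = supNegBirkhoffSum F γ := funext hφ
  have hpres : MeasurePreserving F μ μ :=
    ⟨hF, Measure.ext fun M hM => by rw [Measure.map_apply hF hM, hinv M hM]⟩
  exact ⟨measurable_supNegBirkhoffSum hF hγ, ⟨C, abs_supNegBirkhoffSum_le hC⟩,
    ae_supNegBirkhoffSum_apply_sub_eq hpres hγ hC⟩
end

section
/- Let X be a topological space and φ : X → ℝ a function that is bounded above and lower semicontinuous. Define the oscillation of φ at x by Ω_φ(x) = inf over open neighborhoods U of x of (sup_{u ∈ U} φ(u) − inf_{u ∈ U} φ(u)). Then inf_{x ∈ X} Ω_φ(x) = 0. (Dually, the same holds if φ is bounded below and upper semicontinuous.) -/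
open Set

/-- On the superlevel set `{φ > sup φ - ε}`, which is open by lower semicontinuity and nonempty
by definition of the supremum, the values of `φ` lie in an interval of length `ε`. -/
theorem LowerSemicontinuous.exists_isOpen_ediam_image_le {X : Type*} [TopologicalSpace X]
    [Nonempty X] {φ : X → ℝ} (hlsc : LowerSemicontinuous φ) (hbdd : BddAbove (range φ))
    {ε : ℝ} (hε : 0 < ε) :
    ∃ U : Set X, IsOpen U ∧ U.Nonempty ∧ Metric.ediam (φ '' U) ≤ ENNReal.ofReal ε := by
  set M := sSup (range φ)
  obtain ⟨_, ⟨x, rfl⟩, hx⟩ := exists_lt_of_lt_csSup (range_nonempty φ) (sub_lt_self M hε)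
  refine ⟨φ ⁻¹' Ioi (M - ε), hlsc.isOpen_preimage _, ⟨x, hx⟩, ?_⟩
  have hsub : φ '' (φ ⁻¹' Ioi (M - ε)) ⊆ Icc (M - ε) M := by
    rintro _ ⟨u, hu, rfl⟩
    exact ⟨le_of_lt hu, le_csSup hbdd (mem_range_self u)⟩
  calc Metric.ediam (φ '' (φ ⁻¹' Ioi (M - ε))) ≤ Metric.ediam (Icc (M - ε) M) :=
        Metric.ediam_mono hsub
    _ = ENNReal.ofReal ε := by rw [Real.ediam_Icc, sub_sub_cancel]

/-- If `φ : X → ℝ` is bounded above and lower semicontinuous on a nonempty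
topological space, then the infimum over `x` of the oscillation
`Ω_φ(x) = inf over open neighborhoods U of x of (sup_{u∈U} φ(u) − inf_{u∈U} φ(u))`
is zero. (The oscillation over `U` is expressed as the diameter of `φ '' U`,
valued in `ℝ≥0∞`.) -/
theorem inf_oscillation_eq_zero
    {X : Type*} [TopologicalSpace X] [Nonempty X] (φ : X → ℝ)
    (hbdd : BddAbove (Set.range φ)) (hlsc : LowerSemicontinuous φ) :
    ⨅ x : X, ⨅ (U : Set X) (_ : IsOpen U) (_ : x ∈ U), EMetric.diam (φ '' U) = 0 := by
  refine nonpos_iff_eq_zero.mp (ENNReal.le_of_forall_pos_le_add fun ε hε _ => ?_)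
  obtain ⟨U, hU, ⟨x, hx⟩, hdiam⟩ := hlsc.exists_isOpen_ediam_image_le hbdd (ε := ε) hε
  calc _ ≤ Metric.ediam (φ '' U) := (iInf_le _ x).trans ((iInf₂_le U hU).trans (iInf_le _ hx))
    _ ≤ 0 + ε := by rwa [zero_add, ← ENNReal.ofReal_coe_nnreal]
end

section
/- (Gottschalk–Hedlund theorem, Browder–Lin–Sine form) Let X be a topological space and F : X → X continuous such that the dynamical system (X, F) is minimal, i.e. every orbit {F^n x : n ∈ ℕ} is dense in X. Let γ : X → ℝ be continuous and bounded, with s_n(x) = ∑_{k=0}^{n} γ(F^k x). Then the cohomological equation φ(F x) − φ(x) = γ(x) has a continuous bounded solution φ if and only if the sums s_n are uniformly bounded, sup_{n,x} |s_n(x)| < ∞; under this condition the function φ(x) = sup_n (−s_n(x)) is a continuous bounded solution. -/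
/-!
Consider the skew product `S (x, u) = (F x, u + γ x)` on `X × ℝ` and the closure `K` of the
`S`-orbit of `(x₀, 0)`, which is `(Fⁿ x₀, ∑_{k<n} γ (Fᵏ x₀))`. Bounded sums confine `K` to
`X × [-C, C]`, so its projection to `X` is closed; it contains the dense orbit of `x₀`, so every
fibre of `K` is nonempty. Vertical translation commutes with `S`, so `(y, u) ∈ K` forces
`K_y + u ⊆ K`. For `y = x₀` this puts `(x₀, k u)` in `K` for every `k`, so `u = 0` by the bound;
for general `y`, pick `(x₀, w) ∈ K_y`: then `(y, u), (y, u') ∈ K` give `w + u = 0 = w + u'`.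
Hence `K` is the graph of a function `φ`, continuous because the graph is closed with compact
range, and a solution because `K` is `S`-invariant. Finally `sₙ x = φ (Fⁿ⁺¹ x) - φ x`, so
`supₙ (-sₙ x) = φ x - inf φ` since the orbit of `F x` is dense.
-/

open Function Set

namespace GottschalkHedlund

section Topology

variable {X Y : Type*} [TopologicalSpace X] [TopologicalSpace Y]

theorem isClosed_image_fst_of_subset_prod {s : Set (X × Y)} {k : Set Y} (hk : IsCompact k)
    (hs : IsClosed s) (hsk : s ⊆ univ ×ˢ k) : IsClosed (Prod.fst '' s) := by
  have : CompactSpace k := isCompact_iff_compactSpace.1 hk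
  have hincl : Continuous fun p : X × k => (p.1, (p.2 : Y)) := by fun_prop
  convert isClosedMap_fst_of_compactSpace _ (hs.preimage hincl) using 1
  ext x
  constructor
  · rintro ⟨p, hp, rfl⟩
    exact ⟨(p.1, ⟨p.2, (hsk hp).2⟩), hp, rfl⟩
  · rintro ⟨p, hp, rfl⟩
    exact ⟨_, hp, rfl⟩

theorem continuous_of_isClosed_graph_of_isCompact {f : X → Y} {k : Set Y} (hk : IsCompact k)
    (hfk : ∀ x, f x ∈ k) (hf : IsClosed {p : X × Y | p.2 = f p.1}) : Continuous f := by
  refine continuous_iff_isClosed.2 fun z hz => ?_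
  have hpre : f ⁻¹' z = Prod.fst '' ({p : X × Y | p.2 = f p.1} ∩ univ ×ˢ z) := by
    ext x
    constructor
    · exact fun hx => ⟨(x, f x), ⟨rfl, trivial, hx⟩, rfl⟩
    · rintro ⟨p, ⟨hp, -, hpz⟩, rfl⟩
      rwa [mem_preimage, ← hp]
  rw [hpre]
  exact isClosed_image_fst_of_subset_prod hk (hf.inter (isClosed_univ.prod hz))
    fun p ⟨hp, _⟩ => ⟨trivial, hp ▸ hfk p.1⟩

end Topology

section OrbitClosure

variable {α β : Type*} [TopologicalSpace α] [TopologicalSpace β] {f : α → α} {f' : β → β}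

def orbitClosure (f : α → α) (a : α) : Set α := closure (range fun n => f^[n] a)

theorem iterate_mem_orbitClosure (f : α → α) (a : α) (n : ℕ) : f^[n] a ∈ orbitClosure f a :=
  subset_closure ⟨n, rfl⟩

theorem mapsTo_orbitClosure (hf : Continuous f) (a : α) :
    MapsTo f (orbitClosure f a) (orbitClosure f a) :=
  MapsTo.closure (by rintro _ ⟨n, rfl⟩; exact ⟨n + 1, iterate_succ_apply' f n a⟩) hf

theorem orbitClosure_subset_of_mem (hf : Continuous f) {a b : α} (hb : b ∈ orbitClosure f a) :
    orbitClosure f b ⊆ orbitClosure f a :=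
  closure_minimal (by rintro _ ⟨n, rfl⟩; exact (mapsTo_orbitClosure hf a).iterate n hb)
    isClosed_closure

theorem image_orbitClosure_subset {g : α → β} (hg : Continuous g) (h : Semiconj g f f') (a : α) :
    g '' orbitClosure f a ⊆ orbitClosure f' (g a) :=
  (image_closure_subset_closure_image hg).trans <| closure_mono <| by
    rintro _ ⟨_, ⟨n, rfl⟩, rfl⟩
    exact ⟨n, (h.iterate_right n a).symm⟩

end OrbitClosure

theorem eq_zero_of_forall_abs_nat_mul_le {v C : ℝ} (h : ∀ k : ℕ, |k * v| ≤ C) : v = 0 := by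
  by_contra hv
  obtain ⟨k, hk⟩ := exists_nat_gt (C / |v|)
  have hkv := h k
  rw [abs_mul, Nat.abs_cast] at hkv
  rw [div_lt_iff₀ (abs_pos.2 hv)] at hk
  linarith

variable {X : Type*} {F : X → X} {γ : X → ℝ}

def skewProduct (F : X → X) (γ : X → ℝ) (p : X × ℝ) : X × ℝ := (F p.1, p.2 + γ p.1)

theorem skewProduct_iterate (n : ℕ) (x : X) (u : ℝ) :
    (skewProduct F γ)^[n] (x, u) = (F^[n] x, u + birkhoffSum F γ n x) := by
  induction n with
  | zero => simp
  | succ n ih =>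
    rw [iterate_succ_apply', ih, skewProduct, birkhoffSum_succ, iterate_succ_apply', add_assoc]

theorem semiconj_skewProduct (u : ℝ) :
    Semiconj (fun p : X × ℝ => (p.1, p.2 + u)) (skewProduct F γ) (skewProduct F γ) :=
  fun p => by simp only [skewProduct, add_right_comm]

theorem birkhoffSum_eq_sub_of_apply_sub {φ : X → ℝ} (heq : ∀ x, φ (F x) - φ x = γ x)
    (n : ℕ) (x : X) : birkhoffSum F γ n x = φ (F^[n] x) - φ x := by
  induction n with
  | zero => simp
  | succ n ih => rw [birkhoffSum_succ, ih, ← heq, iterate_succ_apply']; ring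

theorem abs_birkhoffSum_le_of_apply_sub {φ : X → ℝ} {B : ℝ} (hφB : ∀ x, |φ x| ≤ B)
    (heq : ∀ x, φ (F x) - φ x = γ x) (n : ℕ) (x : X) : |birkhoffSum F γ n x| ≤ B + B := by
  rw [birkhoffSum_eq_sub_of_apply_sub heq]
  exact (abs_sub _ _).trans (add_le_add (hφB _) (hφB _))

theorem abs_birkhoffSum_le_of_succ {C : ℝ} (h : ∀ (n : ℕ) (x : X), |birkhoffSum F γ (n + 1) x| ≤ C)
    (n : ℕ) (x : X) : |birkhoffSum F γ n x| ≤ C := by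
  cases n with
  | zero => simpa using (abs_nonneg _).trans (h 0 x)
  | succ n => exact h n x

/-- `birkhoffSum F γ (n + 1)` is the partial sum `sₙ = ∑_{k=0}^{n} γ ∘ Fᵏ`. -/
noncomputable def supSolution (F : X → X) (γ : X → ℝ) (x : X) : ℝ :=
  ⨆ n : ℕ, -birkhoffSum F γ (n + 1) x

theorem abs_supSolution_le {C : ℝ} (hbound : ∀ (n : ℕ) (x : X), |birkhoffSum F γ n x| ≤ C)
    (x : X) : |supSolution F γ x| ≤ C := by
  have hbdd : BddAbove (range fun n : ℕ => -birkhoffSum F γ (n + 1) x) :=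
    ⟨C, by rintro _ ⟨n, rfl⟩; exact neg_le.1 (abs_le.1 (hbound _ x)).1⟩
  refine abs_le.2 ⟨?_, ciSup_le fun n => neg_le.1 (abs_le.1 (hbound _ x)).1⟩
  calc -C ≤ -birkhoffSum F γ (0 + 1) x := neg_le_neg (abs_le.1 (hbound _ x)).2
    _ ≤ supSolution F γ x := le_ciSup hbdd 0

variable [TopologicalSpace X]

theorem continuous_skewProduct (hF : Continuous F) (hγ : Continuous γ) :
    Continuous (skewProduct F γ) := by
  unfold skewProduct
  fun_prop

theorem add_mem_orbitClosure_skewProduct (hF : Continuous F) (hγ : Continuous γ) {x y z : X}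
    {u v : ℝ} (hu : (y, u) ∈ orbitClosure (skewProduct F γ) (x, 0))
    (hv : (z, v) ∈ orbitClosure (skewProduct F γ) (y, 0)) :
    (z, v + u) ∈ orbitClosure (skewProduct F γ) (x, 0) :=
  orbitClosure_subset_of_mem (continuous_skewProduct hF hγ) hu <| by
    simpa using image_orbitClosure_subset (by fun_prop) (semiconj_skewProduct u) _ ⟨_, hv, rfl⟩

theorem supSolution_eq_sub_iInf (hmin : ∀ x : X, Dense (range fun n : ℕ => F^[n] x))
    {φ : X → ℝ} {B : ℝ} (hφ : Continuous φ) (hφB : ∀ x, |φ x| ≤ B)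
    (heq : ∀ x, φ (F x) - φ x = γ x) (x : X) : supSolution F γ x = φ x - ⨅ y, φ y := by
  have hterm : ∀ n : ℕ, -birkhoffSum F γ (n + 1) x = φ x - φ (F^[n] (F x)) := fun n => by
    rw [birkhoffSum_eq_sub_of_apply_sub heq, iterate_succ_apply]
    ring
  have horbit : ⨅ n, φ (F^[n] (F x)) = ⨅ y, φ y := by
    rw [← (hmin (F x)).ciInf' hφ, iInf_range']
  have hbdd : BddBelow (range fun n => φ (F^[n] (F x))) :=
    ⟨-B, by rintro _ ⟨n, rfl⟩; exact (abs_le.1 (hφB _)).1⟩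
  simp only [supSolution, hterm]
  rw [← horbit, Antitone.map_ciInf_of_continuousAt (by fun_prop) antitone_const_tsub hbdd]

section Bounded

variable {C : ℝ} (hbound : ∀ (n : ℕ) (x : X), |birkhoffSum F γ n x| ≤ C)
include hbound

theorem orbitClosure_skewProduct_subset (x : X) :
    orbitClosure (skewProduct F γ) (x, 0) ⊆ univ ×ˢ Icc (-C) C := by
  refine closure_minimal ?_ (isClosed_univ.prod isClosed_Icc)
  rintro _ ⟨n, rfl⟩
  dsimp only
  rw [skewProduct_iterate, zero_add]
  exact ⟨trivial, abs_le.1 (hbound n x)⟩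

theorem eq_zero_of_mem_orbitClosure_skewProduct_self (hF : Continuous F) (hγ : Continuous γ)
    {x : X} {v : ℝ} (hv : (x, v) ∈ orbitClosure (skewProduct F γ) (x, 0)) : v = 0 := by
  have hmul : ∀ k : ℕ, (x, k * v) ∈ orbitClosure (skewProduct F γ) (x, 0) := by
    intro k
    induction k with
    | zero => simpa using iterate_mem_orbitClosure (skewProduct F γ) (x, 0) 0
    | succ k ih => simpa [add_mul] using add_mem_orbitClosure_skewProduct hF hγ hv ih
  exact eq_zero_of_forall_abs_nat_mul_le fun k =>
    abs_le.2 (orbitClosure_skewProduct_subset hbound x (hmul k)).2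

theorem exists_mem_orbitClosure_skewProduct (hmin : ∀ x : X, Dense (range fun n : ℕ => F^[n] x))
    (x y : X) : ∃ u, (y, u) ∈ orbitClosure (skewProduct F γ) (x, 0) := by
  have hclosed : IsClosed (Prod.fst '' orbitClosure (skewProduct F γ) (x, 0)) :=
    isClosed_image_fst_of_subset_prod isCompact_Icc isClosed_closure
      (orbitClosure_skewProduct_subset hbound x)
  have horbit : range (fun n => F^[n] x) ⊆ Prod.fst '' orbitClosure (skewProduct F γ) (x, 0) := by
    rintro _ ⟨n, rfl⟩
    exact ⟨_, iterate_mem_orbitClosure _ _ n, by rw [skewProduct_iterate]⟩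
  obtain ⟨p, hp, rfl⟩ : y ∈ Prod.fst '' orbitClosure (skewProduct F γ) (x, 0) := by
    rw [← hclosed.closure_eq]
    exact (hmin x).mono horbit y
  exact ⟨p.2, hp⟩

variable (hF : Continuous F) (hγ : Continuous γ)
  (hmin : ∀ x : X, Dense (range fun n : ℕ => F^[n] x))
include hF hγ hmin

theorem eq_of_mem_orbitClosure_skewProduct {x y : X} {u u' : ℝ}
    (hu : (y, u) ∈ orbitClosure (skewProduct F γ) (x, 0))
    (hu' : (y, u') ∈ orbitClosure (skewProduct F γ) (x, 0)) : u = u' := by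
  obtain ⟨w, hw⟩ := exists_mem_orbitClosure_skewProduct hbound hmin y x
  have h := eq_zero_of_mem_orbitClosure_skewProduct_self hbound hF hγ
    (add_mem_orbitClosure_skewProduct hF hγ hu hw)
  have h' := eq_zero_of_mem_orbitClosure_skewProduct_self hbound hF hγ
    (add_mem_orbitClosure_skewProduct hF hγ hu' hw)
  linarith

/-- The solution vanishing at `x₀`: its graph is the orbit closure of `(x₀, 0)`. -/
theorem exists_continuous_apply_sub_eq (x₀ : X) :
    ∃ φ : X → ℝ, Continuous φ ∧ (∀ x, |φ x| ≤ C) ∧ ∀ x, φ (F x) - φ x = γ x := by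
  choose φ hφ using exists_mem_orbitClosure_skewProduct hbound hmin x₀
  have hφC : ∀ x, φ x ∈ Icc (-C) C := fun x => (orbitClosure_skewProduct_subset hbound x₀ (hφ x)).2
  have hgraph : {p : X × ℝ | p.2 = φ p.1} = orbitClosure (skewProduct F γ) (x₀, 0) := by
    ext ⟨x, u⟩
    refine ⟨?_, fun h => eq_of_mem_orbitClosure_skewProduct hbound hF hγ hmin h (hφ x)⟩
    rintro (rfl : u = φ x)
    exact hφ x
  refine ⟨φ, continuous_of_isClosed_graph_of_isCompact isCompact_Icc hφC
    (hgraph ▸ isClosed_closure), fun x => abs_le.2 (hφC x), fun x => ?_⟩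
  have hstep : (F x, φ x + γ x) ∈ orbitClosure (skewProduct F γ) (x₀, 0) :=
    mapsTo_orbitClosure (continuous_skewProduct hF hγ) _ (hφ x)
  linarith [eq_of_mem_orbitClosure_skewProduct hbound hF hγ hmin hstep (hφ (F x))]

theorem supSolution_apply_sub (x : X) : supSolution F γ (F x) - supSolution F γ x = γ x := by
  obtain ⟨φ, hφ, hφC, heq⟩ := exists_continuous_apply_sub_eq hbound hF hγ hmin x
  rw [supSolution_eq_sub_iInf hmin hφ hφC heq, supSolution_eq_sub_iInf hmin hφ hφC heq, ← heq]
  ring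

theorem continuous_supSolution : Continuous (supSolution F γ) := by
  refine continuous_iff_continuousAt.2 fun x₀ => ?_
  obtain ⟨φ, hφ, hφC, heq⟩ := exists_continuous_apply_sub_eq hbound hF hγ hmin x₀
  rw [funext (supSolution_eq_sub_iInf hmin hφ hφC heq)]
  exact (hφ.sub continuous_const).continuousAt

end Bounded

end GottschalkHedlund

open GottschalkHedlund in
theorem gottschalk_hedlund_general
    {X : Type*} [TopologicalSpace X]
    (F : X → X) (hFc : Continuous F)
    (hmin : ∀ x : X, Dense (Set.range fun n : ℕ => F^[n] x))
    (γ : X → ℝ) (hγc : Continuous γ) :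
    ((∃ φ : X → ℝ, Continuous φ ∧ (∃ C : ℝ, ∀ x, |φ x| ≤ C) ∧
        ∀ x, φ (F x) - φ x = γ x) ↔
      ∃ C : ℝ, ∀ (n : ℕ) (x : X), |∑ k ∈ Finset.range (n + 1), γ (F^[k] x)| ≤ C) ∧
    ((∃ C : ℝ, ∀ (n : ℕ) (x : X), |∑ k ∈ Finset.range (n + 1), γ (F^[k] x)| ≤ C) →
      (Continuous fun x : X => ⨆ n : ℕ, -(∑ k ∈ Finset.range (n + 1), γ (F^[k] x))) ∧
      (∃ C : ℝ, ∀ x : X,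
        |⨆ n : ℕ, -(∑ k ∈ Finset.range (n + 1), γ (F^[k] x))| ≤ C) ∧
      ∀ x : X,
        (⨆ n : ℕ, -(∑ k ∈ Finset.range (n + 1), γ (F^[k] (F x)))) -
        (⨆ n : ℕ, -(∑ k ∈ Finset.range (n + 1), γ (F^[k] x))) = γ x) := by
  have hsup : (∃ C : ℝ, ∀ (n : ℕ) (x : X), |birkhoffSum F γ (n + 1) x| ≤ C) →
      Continuous (supSolution F γ) ∧ (∃ C : ℝ, ∀ x, |supSolution F γ x| ≤ C) ∧
        ∀ x, supSolution F γ (F x) - supSolution F γ x = γ x := by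
    rintro ⟨C, hC⟩
    have hbound := abs_birkhoffSum_le_of_succ hC
    exact ⟨continuous_supSolution hbound hFc hγc hmin, ⟨C, abs_supSolution_le hbound⟩,
      supSolution_apply_sub hbound hFc hγc hmin⟩
  exact ⟨⟨fun ⟨_, _, ⟨B, hB⟩, heq⟩ =>
    ⟨B + B, fun n => abs_birkhoffSum_le_of_apply_sub hB heq (n + 1)⟩, fun h => ⟨_, hsup h⟩⟩, hsup⟩

/-- Gottschalk–Hedlund, Browder–Lin–Sine form: for a minimal system
`(X, F)` and a continuous bounded `γ`, the cohomological equation has a continuous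
bounded solution iff the sums `s_n` are uniformly bounded, in which case
`φ(x) = sup_n (−s_n(x))` is such a solution. -/
theorem gottschalk_hedlund
    {X : Type*} [TopologicalSpace X] [Nonempty X]
    (F : X → X) (hFc : Continuous F)
    (hmin : ∀ x : X, Dense (Set.range fun n : ℕ => F^[n] x))
    (γ : X → ℝ) (hγc : Continuous γ) (hγb : ∃ C : ℝ, ∀ x, |γ x| ≤ C) :
    ((∃ φ : X → ℝ, Continuous φ ∧ (∃ C : ℝ, ∀ x, |φ x| ≤ C) ∧
        ∀ x, φ (F x) - φ x = γ x) ↔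
      ∃ C : ℝ, ∀ (n : ℕ) (x : X), |∑ k ∈ Finset.range (n + 1), γ (F^[k] x)| ≤ C) ∧
    ((∃ C : ℝ, ∀ (n : ℕ) (x : X), |∑ k ∈ Finset.range (n + 1), γ (F^[k] x)| ≤ C) →
      (Continuous fun x : X => ⨆ n : ℕ, -(∑ k ∈ Finset.range (n + 1), γ (F^[k] x))) ∧
      (∃ C : ℝ, ∀ x : X,
        |⨆ n : ℕ, -(∑ k ∈ Finset.range (n + 1), γ (F^[k] x))| ≤ C) ∧
      ∀ x : X,
        (⨆ n : ℕ, -(∑ k ∈ Finset.range (n + 1), γ (F^[k] (F x)))) -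
        (⨆ n : ℕ, -(∑ k ∈ Finset.range (n + 1), γ (F^[k] x))) = γ x) :=
  gottschalk_hedlund_general F hFc hmin γ hγc
end

section
/- Let B be a (real or complex) Banach space, T : B → B a bounded linear operator, and h ∈ B. Call a vector v ∈ B almost periodic if its orbit {T^n v : n ∈ ℕ} is precompact (has compact closure). Then the equation T f − f = h has an almost periodic solution f if and only if the set of partial sums {s_n = ∑_{k=0}^{n} T^k h : n ∈ ℕ} is precompact in B. Moreover, under this condition every solution of T f − f = h is almost periodic. -/
/-!
If `T f - f = h`, then `T^(n+1) f = f + s n` for the partial sums `s n = ∑_{k ≤ n} T^k h`, so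
the orbit of `f` is, up to the point `f` itself, a translate of the set of partial sums; hence
one is precompact iff the other is.

For the existence of a solution, `s (n+1) = T (s n) + h` says that the partial sums form an
orbit of the affine map `x ↦ T x + h`. Their Cesàro means lie in the closed convex hull of a
precompact set, which is compact by Mazur's theorem, and they are almost fixed by the affine map:
the defect telescopes to `(s (N+1) - s 0) / (N+1)`. A cluster point `g` of the means is then a
fixed point, `T g + h = g`, and `f = -g` solves `T f - f = h`.
-/

open Set Finset Filter Topology

namespace ContinuousLinearMap

theorem sum_range_succ_pow_apply {R M : Type*} [Semiring R] [TopologicalSpace M]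
    [AddCommMonoid M] [ContinuousAdd M] [Module R M] (T : M →L[R] M) (h : M) (n : ℕ) :
    ∑ k ∈ Finset.range (n + 1), (T ^ k) h = T (∑ k ∈ Finset.range n, (T ^ k) h) + h := by
  simpa only [_root_.sum_apply, _root_.add_apply, mul_apply_eq_comp, one_apply_eq_self] using
    congr($(geom_sum_succ (x := T) (n := n)) h)

variable {R M : Type*} [Ring R] [TopologicalSpace M] [AddCommGroup M] [IsTopologicalAddGroup M]
  [Module R M] (T : M →L[R] M)

theorem pow_apply_eq_add_sum_of_apply_sub_eq {f h : M} (hf : T f - f = h) (n : ℕ) :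
    (T ^ n) f = f + ∑ k ∈ Finset.range n, (T ^ k) h := by
  have := congr($(geom_sum_mul T n) f)
  simp only [mul_apply_eq_comp, _root_.sub_apply, one_apply_eq_self, _root_.sum_apply, hf] at this
  rw [eq_sub_iff_add_eq] at this
  rw [← this, add_comm]

theorem isCompact_closure_range_pow_apply_iff [T2Space M] {f h : M} (hf : T f - f = h) :
    IsCompact (closure (Set.range fun n : ℕ => (T ^ n) f)) ↔
      IsCompact (closure (Set.range fun n : ℕ => ∑ k ∈ Finset.range (n + 1), (T ^ k) h)) := by
  have orbit_succ (n : ℕ) := T.pow_apply_eq_add_sum_of_apply_sub_eq hf (n + 1)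
  constructor
  · intro hK
    refine (hK.image (continuous_sub_right f)).closure_of_subset ?_
    rintro _ ⟨n, rfl⟩
    exact ⟨_, subset_closure ⟨n + 1, rfl⟩, by simp [orbit_succ]⟩
  · intro hK
    refine ((hK.image (continuous_const_add f)).insert f).closure_of_subset ?_
    rintro _ ⟨_ | n, rfl⟩
    · simp
    · exact Or.inr ⟨_, subset_closure ⟨n, rfl⟩, (orbit_succ n).symm⟩

end ContinuousLinearMap

section CesaroMean

variable {E : Type*} [AddCommGroup E] [Module ℝ E]

noncomputable def cesaroMean (u : ℕ → E) (N : ℕ) : E :=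
  ((N : ℝ) + 1)⁻¹ • ∑ n ∈ Finset.range (N + 1), u n

theorem cesaroMean_mem_convexHull (u : ℕ → E) (N : ℕ) :
    cesaroMean u N ∈ convexHull ℝ (range u) := by
  have := (Finset.range (N + 1)).centerMass_mem_convexHull (w := fun _ => (1 : ℝ)) (by simp)
    (by rw [sum_const, card_range, nsmul_one]; positivity) (z := u) fun n _ => mem_range_self n
  simpa [centerMass, cesaroMean] using this

theorem LinearMap.apply_cesaroMean_add_sub_cesaroMean (L : E →ₗ[ℝ] E) (c : E) {u : ℕ → E}
    (hu : ∀ n, u (n + 1) = L (u n) + c) (N : ℕ) :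
    L (cesaroMean u N) + c - cesaroMean u N = ((N : ℝ) + 1)⁻¹ • (u (N + 1) - u 0) := by
  have hc : c = ((N : ℝ) + 1)⁻¹ • ∑ _n ∈ Finset.range (N + 1), c := by
    rw [sum_const, card_range, ← Nat.cast_smul_eq_nsmul ℝ, smul_smul]
    push_cast
    rw [inv_mul_cancel₀ (by positivity), one_smul]
  rw [cesaroMean, ← sum_range_sub, map_smul, map_sum, hc, ← smul_add, ← smul_sub,
    ← sum_add_distrib, ← sum_sub_distrib]
  simp only [hu]

end CesaroMean

theorem ContinuousLinearMap.exists_apply_add_eq_self_of_isCompact_closure_range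
    {E : Type*} [NormedAddCommGroup E] [NormedSpace ℝ E] [CompleteSpace E] (L : E →L[ℝ] E)
    (c : E) {u : ℕ → E} (hu : ∀ n, u (n + 1) = L (u n) + c)
    (hK : IsCompact (closure (range u))) :
    ∃ g, L g + c = g := by
  have hmeans : IsCompact (closure (convexHull ℝ (range u))) :=
    (totallyBounded_convexHull.2 (hK.totallyBounded.subset subset_closure)).closure
      |>.isCompact_of_isClosed isClosed_closure
  obtain ⟨C, hC⟩ := (hK.isBounded.subset subset_closure).exists_norm_le
  have hbdd : IsBoundedUnder (· ≤ ·) atTop fun N => ‖u (N + 1) - u 0‖ :=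
    isBoundedUnder_of ⟨C + C, fun N =>
      (norm_sub_le _ _).trans (add_le_add (hC _ (mem_range_self _)) (hC _ (mem_range_self _)))⟩
  have hdefect : Tendsto (fun N => L (cesaroMean u N) + c - cesaroMean u N) atTop (𝓝 0) := by
    refine Tendsto.congr
      (fun N => ((L : E →ₗ[ℝ] E).apply_cesaroMean_add_sub_cesaroMean c hu N).symm) ?_
    exact (tendsto_one_div_add_atTop_nhds_zero_nat.congr fun N => one_div _)
      |>.zero_smul_isBoundedUnder_le hbdd
  obtain ⟨g, -, φ, hφ, hg⟩ :=
    hmeans.tendsto_subseq fun N => subset_closure (cesaroMean_mem_convexHull u N)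
  have hcont : Continuous fun x => L x + c - x := by fun_prop
  exact ⟨g, sub_eq_zero.1 <|
    tendsto_nhds_unique ((hcont.tendsto g).comp hg) (hdefect.comp hφ.tendsto_atTop)⟩

/-- For a bounded linear operator `T` on a Banach space `B` (real or
complex) and `h ∈ B`, the equation `T f − f = h` has an almost periodic solution
(one with precompact orbit `{T^n f}`) iff the set of partial sums
`{∑_{k=0}^{n} T^k h}` is precompact; moreover, in this case every solution is
almost periodic. -/
theorem almost_periodic_solution_iff_partial_sums_precompact
    {𝕜 : Type*} [RCLike 𝕜] {B : Type*} [NormedAddCommGroup B] [NormedSpace 𝕜 B]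
    [CompleteSpace B] (T : B →L[𝕜] B) (h : B) :
    ((∃ f : B, T f - f = h ∧
        IsCompact (closure (Set.range fun n : ℕ => (T ^ n) f))) ↔
      IsCompact (closure (Set.range fun n : ℕ =>
        ∑ k ∈ Finset.range (n + 1), (T ^ k) h))) ∧
    (IsCompact (closure (Set.range fun n : ℕ =>
        ∑ k ∈ Finset.range (n + 1), (T ^ k) h)) →
      ∀ f : B, T f - f = h →
        IsCompact (closure (Set.range fun n : ℕ => (T ^ n) f))) := by
  let _ : NormedSpace ℝ B := NormedSpace.restrictScalars ℝ 𝕜 B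
  refine ⟨⟨fun ⟨f, hf, hK⟩ => (T.isCompact_closure_range_pow_apply_iff hf).1 hK, fun hK => ?_⟩,
    fun hK f hf => (T.isCompact_closure_range_pow_apply_iff hf).2 hK⟩
  obtain ⟨g, hg⟩ := ((T : B →+ B).toRealLinearMap T.continuous)
    |>.exists_apply_add_eq_self_of_isCompact_closure_range h
      (fun n => T.sum_range_succ_pow_apply h (n + 1)) hK
  have hsol : T (-g) - -g = h := by
    rw [map_neg, neg_sub_neg]
    exact sub_eq_of_eq_add' hg.symm
  exact ⟨-g, hsol, (T.isCompact_closure_range_pow_apply_iff hsol).2 hK⟩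
end

section
/- Let (X, μ) be a measurable space with a finite measure μ, F : X → X measurable with μ invariant (μ(F⁻¹ M) = μ(M) for all measurable M), and γ : X → ℝ a nonnegative measurable function. Then for μ-almost every x in the set {x : γ(x) > 0}, the resolving series ∑_{k=0}^{∞} γ(F^k x) diverges (equals +∞). (This generalizes the Poincaré recurrence theorem, which is the case where γ is the indicator of a measurable set.) -/
open MeasureTheory Filter

/-- If terms are nonnegative and frequently ≥ ε > 0, partial sums tend to ∞. -/
lemma partial_sums_tendsto_of_frequently {u : ℕ → ℝ} (hu : ∀ k, 0 ≤ u k) {ε : ℝ}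
    (hε : 0 < ε) (hfreq : ∃ᶠ k in atTop, ε ≤ u k) :
    Tendsto (fun n : ℕ => ∑ k ∈ Finset.range n, u k) atTop atTop := by
  obtain ⟨φ, hφ, hφε⟩ := extraction_of_frequently_atTop hfreq
  set S : ℕ → ℝ := fun n => ∑ k ∈ Finset.range n, u k
  have hmono : Monotone S := fun m n hmn =>
    Finset.sum_le_sum_of_subset_of_nonneg (Finset.range_subset_range.2 hmn) (fun i _ _ => hu i)
  have key : ∀ m : ℕ, ((m : ℝ) + 1) * ε ≤ S (φ m + 1) := by
    intro m
    induction m with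
    | zero =>
      simpa [S, Finset.sum_range_succ] using
        add_le_add (Finset.sum_nonneg fun i _ => hu i) (hφε 0)
    | succ m ih =>
      have h1' : φ m + 1 ≤ φ (m + 1) := Nat.succ_le_of_lt (hφ (Nat.lt_succ_self m))
      have : S (φ (m + 1) + 1) = S (φ (m + 1)) + u (φ (m + 1)) := by
        simp [S, Finset.sum_range_succ]
      rw [this]
      have := add_le_add (ih.trans (hmono h1')) (hφε (m + 1))
      push_cast
      calc ((m : ℝ) + 1 + 1) * ε = ((m : ℝ) + 1) * ε + ε := by ring
        _ ≤ S (φ (m + 1)) + u (φ (m + 1)) := this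
      
  refine tendsto_atTop_of_monotone_of_subseq hmono (φ := fun m => φ m + 1) (l := atTop) ?_
  refine tendsto_atTop_mono (fun m => key m) ?_
  have : Tendsto (fun m : ℕ => ((m : ℝ) + 1) * ε) atTop atTop := by
    apply Tendsto.atTop_mul_const hε
    exact tendsto_atTop_add_const_right _ _ tendsto_natCast_atTop_atTop
  exact this

/-- generalized Poincaré recurrence: for a finite invariant measure `μ`
and a nonnegative measurable `γ`, for almost every `x` with `γ(x) > 0` the resolving
series `∑_{k≥0} γ(F^k x)` diverges to `+∞`. -/
theorem resolving_series_diverges_ae_on_positivity_set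
    {X : Type*} [MeasurableSpace X] (μ : Measure X) [IsFiniteMeasure μ]
    (F : X → X) (hF : Measurable F)
    (hinv : ∀ M : Set X, MeasurableSet M → μ (F ⁻¹' M) = μ M)
    (γ : X → ℝ) (hγm : Measurable γ) (hγ0 : ∀ x, 0 ≤ γ x) :
    ∀ᵐ x ∂μ, 0 < γ x →
      Tendsto (fun n : ℕ => ∑ k ∈ Finset.range n, γ (F^[k] x)) atTop atTop := by
  have hmp : MeasurePreserving F μ μ := by
    refine ⟨hF, Measure.ext fun s hs => ?_⟩
    rw [Measure.map_apply hF hs]; exact hinv s hs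
  have hcons : Conservative F μ := hmp.conservative
  have hae : ∀ n : ℕ, ∀ᵐ x ∂μ, x ∈ {y | 1 / ((n : ℝ) + 1) ≤ γ y} →
      ∃ᶠ k in atTop, F^[k] x ∈ {y | 1 / ((n : ℝ) + 1) ≤ γ y} := by
    intro n
    exact hcons.ae_mem_imp_frequently_image_mem
      (measurableSet_le measurable_const hγm).nullMeasurableSet
  filter_upwards [ae_all_iff.2 hae] with x hx hpos
  obtain ⟨n, hn⟩ := exists_nat_one_div_lt hpos
  have hx' := hx n (le_of_lt hn)
  exact partial_sums_tendsto_of_frequently (fun k => hγ0 _)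
    (by positivity : (0:ℝ) < 1 / ((n : ℝ) + 1)) hx'
end

section
/- Let X be a compact Hausdorff topological space, F : X → X continuous, and T_F the Koopman operator on the Banach space C(X, ℝ) of continuous real-valued functions with the supremum norm, defined by (T_F φ)(x) = φ(F x). Then the range of T_F − I is a closed subspace of C(X, ℝ) (i.e., the cohomological equation is normally solvable in C(X)) if and only if F is preperiodic, i.e. there exist integers l ≥ 0 and p ≥ 1 with F^{l+p} = F^{l}. -/
/-!
If `F^[l + p] = F^[l]`, the Koopman operator `T` satisfies `T ^ (l + p) = T ^ l`, so it is
annihilated by `q * (X - 1)` with `q = X ^ l * (1 + X + ⋯ + X ^ (p - 1))`. Since `q(1) = p ≠ 0`,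
`q` is coprime to `X - 1`, and a Bézout identity shows that the range of `T - 1` is the kernel
of the bounded operator `q(T)`, hence closed.

Conversely, if the range of `T - 1` is closed, the open mapping theorem solves every
coboundary `γ = η ∘ F - η` with `‖η‖ ≤ C ‖γ‖`; the Birkhoff sums of `γ` telescope to
`η ∘ F^[n] - η`, so they are bounded by `2 C ‖γ‖`. If `F` is not preperiodic then for every `n`
some orbit segment `x, F x, …, F^[2n-1] x` has no repetition (a repetition before time `N` at
every point would force `F^[N + N!] = F^[N]`). An Urysohn function `φ` vanishing on the first
half of that segment and equal to `1` on the second half gives the coboundary `φ ∘ F^[n] - φ`,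
of norm at most `1`, whose `n`-th Birkhoff sum at `x` is `n`: impossible once `n > 2 C`.
-/

open Function Polynomial

def Function.IsPreperiodic {α : Type*} (f : α → α) : Prop :=
  ∃ l p : ℕ, 1 ≤ p ∧ f^[l + p] = f^[l]

namespace Polynomial

theorem range_aeval_eq_ker_aeval_of_isCoprime {R M : Type*} [CommRing R] [AddCommGroup M]
    [Module R M] (f : Module.End R M) {p q : R[X]} (hpq : IsCoprime p q)
    (h : aeval f (q * p) = 0) :
    LinearMap.range (aeval f p) = LinearMap.ker (aeval f q) := by
  apply le_antisymm
  · rintro _ ⟨v, rfl⟩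
    rw [LinearMap.mem_ker, ← Module.End.mul_apply, ← map_mul, h, LinearMap.zero_apply]
  · intro v hv
    obtain ⟨a, b, hab⟩ := hpq
    rw [mul_comm a] at hab
    refine ⟨aeval f a v, ?_⟩
    simpa [LinearMap.mem_ker.1 hv] using congr_arg (fun r => aeval f r v) hab

theorem isCoprime_X_sub_C_of_eval_ne_zero {K : Type*} [Field K] {a : K} {q : K[X]}
    (h : q.eval a ≠ 0) : IsCoprime (X - C a) q :=
  (EuclideanDomain.dvd_or_coprime _ _ (irreducible_X_sub_C a)).resolve_left
    (by rwa [dvd_iff_isRoot])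

end Polynomial

section PowAddEqPow

variable {K : Type*} [Field K] [CharZero K] {l p : ℕ}

theorem LinearMap.range_sub_one_eq_ker_of_pow_add_eq_pow {M : Type*} [AddCommGroup M]
    [Module K M] (T : Module.End K M) (hp : p ≠ 0) (h : T ^ (l + p) = T ^ l) :
    LinearMap.range (T - 1) = LinearMap.ker (T ^ l * ∑ i ∈ Finset.range p, T ^ i) := by
  set q : K[X] := X ^ l * ∑ i ∈ Finset.range p, X ^ i
  have hq : q.eval 1 ≠ 0 := by simp [q, hp]
  have hqT : aeval T (q * (X - C 1)) = 0 := by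
    rw [C_1, mul_assoc, geom_sum_mul, mul_sub, mul_one, ← pow_add]
    simp [h]
  simpa [q] using
    range_aeval_eq_ker_aeval_of_isCoprime T (isCoprime_X_sub_C_of_eval_ne_zero hq) hqT

theorem ContinuousLinearMap.isClosed_range_sub_one_of_pow_add_eq_pow {E : Type*}
    [TopologicalSpace E] [AddCommGroup E] [Module K E] [IsTopologicalAddGroup E]
    [ContinuousConstSMul K E] [T1Space E] (T : E →L[K] E) (hp : p ≠ 0)
    (h : T ^ (l + p) = T ^ l) : IsClosed (Set.range ⇑(T - 1)) := by
  have h' : (T : Module.End K E) ^ (l + p) = (T : Module.End K E) ^ l := by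
    exact_mod_cast congr_arg ((↑) : (E →L[K] E) → Module.End K E) h
  have hrange : Set.range ⇑(T - 1) = LinearMap.range ((T : Module.End K E) - 1) := by
    rw [LinearMap.coe_range]
    rfl
  have hker : LinearMap.ker
      ((T : Module.End K E) ^ l * ∑ i ∈ Finset.range p, (T : Module.End K E) ^ i) =
      (T ^ l * ∑ i ∈ Finset.range p, T ^ i).ker := by
    push_cast
    rfl
  rw [hrange, (T : Module.End K E).range_sub_one_eq_ker_of_pow_add_eq_pow hp h', hker]
  exact isClosed_ker _

end PowAddEqPow

theorem ContinuousLinearMap.exists_preimage_norm_le_of_isClosed_range {𝕜 E F : Type*}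
    [NontriviallyNormedField 𝕜] [NormedAddCommGroup E] [NormedSpace 𝕜 E] [CompleteSpace E]
    [NormedAddCommGroup F] [NormedSpace 𝕜 F] [CompleteSpace F] (f : E →L[𝕜] F)
    (hf : IsClosed (Set.range f)) :
    ∃ C > 0, ∀ y ∈ Set.range f, ∃ x, f x = y ∧ ‖x‖ ≤ C * ‖y‖ := by
  have : CompleteSpace f.range := by
    rw [← ContinuousLinearMap.coe_coe, ← LinearMap.coe_range] at hf
    exact hf.completeSpace_coe
  obtain ⟨C, hC, hpre⟩ := f.rangeRestrict.exists_preimage_norm_le f.surjective_rangeRestrict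
  refine ⟨C, hC, ?_⟩
  rintro _ ⟨y, rfl⟩
  obtain ⟨x, hx, hxC⟩ := hpre ⟨f y, y, rfl⟩
  exact ⟨x, congr_arg Subtype.val hx, hxC⟩

section Iterate

variable {α : Type*} {f : α → α}

theorem iterate_add_factorial_apply_eq {x : α} {i j N : ℕ} (hij : i < j) (hjN : j ≤ N)
    (h : f^[i] x = f^[j] x) : f^[N + N.factorial] x = f^[N] x := by
  have hper : IsPeriodicPt f (j - i) (f^[i] x) := by
    rw [IsPeriodicPt, IsFixedPt, ← iterate_add_apply, Nat.sub_add_cancel hij.le, h]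
  have hN : f^[N - i] (f^[i] x) = f^[N] x := by
    rw [← iterate_add_apply, Nat.sub_add_cancel (by omega)]
  have hperN : IsPeriodicPt f N.factorial (f^[N] x) :=
    hN ▸ (hper.apply_iterate (N - i)).trans_dvd
      (Nat.dvd_factorial (Nat.sub_pos_of_lt hij) (by omega))
  rw [add_comm, iterate_add_apply]
  exact hperN

theorem exists_injOn_iterate_of_not_isPreperiodic (hf : ¬ IsPreperiodic f) (N : ℕ) :
    ∃ x, Set.InjOn (f^[·] x) (Set.Iio N) := by
  by_contra! h
  refine hf ⟨N, N.factorial, N.factorial_pos, funext fun x => ?_⟩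
  have hx := h x
  simp only [Set.InjOn, Set.mem_Iio, not_forall] at hx
  obtain ⟨i, hi, j, hj, hij, hne⟩ := hx
  rcases Nat.lt_or_gt_of_ne hne with hlt | hlt
  · exact iterate_add_factorial_apply_eq hlt hj.le hij
  · exact iterate_add_factorial_apply_eq hlt hi.le hij.symm

theorem birkhoffSum_comp_sub {G : Type*} [AddCommGroup G] (g : α → G) (n : ℕ) (x : α) :
    birkhoffSum f (g ∘ f - g) n x = g (f^[n] x) - g x := by
  simpa [birkhoffSum, ← iterate_succ_apply' f] using
    Finset.sum_range_sub (fun k => g (f^[k] x)) n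

end Iterate

section Koopman

variable {X : Type*} [TopologicalSpace X]

/-- `C(X, ℝ)` carries the compact-open topology, which is the sup-norm topology when `X` is
compact. -/
noncomputable def koopman (F : C(X, X)) : C(X, ℝ) →L[ℝ] C(X, ℝ) where
  toLinearMap := (ContinuousMap.compStarAlgHom' ℝ ℝ F).toLinearMap
  cont := (ContinuousMap.compRightContinuousMap ℝ F).continuous

@[simp]
theorem koopman_apply (F : C(X, X)) (φ : C(X, ℝ)) (x : X) : koopman F φ x = φ (F x) := rfl

theorem koopman_pow_apply (F : C(X, X)) (n : ℕ) (φ : C(X, ℝ)) (x : X) :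
    (koopman F ^ n) φ x = φ (F^[n] x) := by
  induction n generalizing φ with
  | zero => rfl
  | succ n ih => rw [pow_succ, mul_apply_eq_comp, ih, koopman_apply, iterate_succ_apply']

theorem koopman_pow_sub_one_apply (F : C(X, X)) (n : ℕ) (φ : C(X, ℝ)) (x : X) :
    ((koopman F ^ n - 1) φ) x = φ (F^[n] x) - φ x :=
  koopman_pow_apply F n φ x ▸ rfl

theorem birkhoffSum_koopman_sub_one_apply (F : C(X, X)) (η : C(X, ℝ)) (n : ℕ) (x : X) :
    birkhoffSum F ((koopman F - 1) η) n x = η (F^[n] x) - η x :=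
  birkhoffSum_comp_sub η n x

theorem isClosed_range_koopman_sub_one_of_isPreperiodic (F : C(X, X)) (hF : IsPreperiodic F) :
    IsClosed (Set.range ⇑(koopman F - 1)) := by
  obtain ⟨l, p, hp, h⟩ := hF
  have hK : koopman F ^ (l + p) = koopman F ^ l := by
    ext φ x
    simp only [koopman_pow_apply, h]
  exact (koopman F).isClosed_range_sub_one_of_pow_add_eq_pow (Nat.one_le_iff_ne_zero.1 hp) hK

variable [CompactSpace X]

theorem exists_abs_birkhoffSum_le_of_isClosed_range (F : C(X, X))
    (h : IsClosed (Set.range ⇑(koopman F - 1))) :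
    ∃ C > 0, ∀ γ ∈ Set.range ⇑(koopman F - 1), ∀ n x, |birkhoffSum F γ n x| ≤ C * ‖γ‖ := by
  obtain ⟨C, hC0, hC⟩ := (koopman F - 1).exists_preimage_norm_le_of_isClosed_range h
  refine ⟨2 * C, by positivity, fun γ hγ n x => ?_⟩
  obtain ⟨η, rfl, hη⟩ := hC γ hγ
  rw [birkhoffSum_koopman_sub_one_apply]
  calc |η (F^[n] x) - η x| ≤ ‖η‖ + ‖η‖ :=
        (abs_sub _ _).trans (add_le_add (η.norm_coe_le_norm _) (η.norm_coe_le_norm _))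
    _ ≤ 2 * C * ‖(koopman F - 1) η‖ := by linarith

variable [T2Space X]

theorem exists_continuous_orbit_zero_one {f : X → X} {x : X} {n : ℕ}
    (hx : Set.InjOn (f^[·] x) (Set.Iio (2 * n))) :
    ∃ φ : C(X, ℝ), (∀ k < n, φ (f^[k] x) = 0) ∧ (∀ k < n, φ (f^[n + k] x) = 1) ∧
      ∀ y, φ y ∈ Set.Icc (0 : ℝ) 1 := by
  have hdisj : Disjoint ((f^[·] x) '' Set.Iio n) ((f^[·] x) '' Set.Ico n (2 * n)) :=
    ((Set.Iio_disjoint_Ici le_rfl).mono_right Set.Ico_subset_Ici_self).image hx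
      (Set.Iio_subset_Iio (by omega)) Set.Ico_subset_Iio_self
  obtain ⟨φ, h0, h1, h01⟩ := exists_continuous_zero_one_of_isClosed
    ((Set.finite_Iio n).image _).isClosed ((Set.finite_Ico n (2 * n)).image _).isClosed hdisj
  exact ⟨φ, fun k hk => h0 ⟨k, hk, rfl⟩, fun k hk => h1 ⟨n + k, ⟨by omega, by omega⟩, rfl⟩, h01⟩

theorem exists_mem_range_koopman_sub_one_birkhoffSum_eq (F : C(X, X)) {x : X} {n : ℕ}
    (hx : Set.InjOn (F^[·] x) (Set.Iio (2 * n))) :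
    ∃ γ ∈ Set.range ⇑(koopman F - 1), ‖γ‖ ≤ 1 ∧ birkhoffSum F γ n x = n := by
  obtain ⟨φ, h0, h1, h01⟩ := exists_continuous_orbit_zero_one hx
  refine ⟨(koopman F ^ n - 1) φ, ⟨(∑ i ∈ Finset.range n, koopman F ^ i) φ, ?_⟩, ?_, ?_⟩
  · rw [← mul_apply_eq_comp, mul_geom_sum]
  · refine (ContinuousMap.norm_le _ zero_le_one).2 fun y => ?_
    obtain ⟨hy0, hy1⟩ := h01 y
    obtain ⟨hFy0, hFy1⟩ := h01 (F^[n] y)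
    rw [koopman_pow_sub_one_apply, Real.norm_eq_abs, abs_sub_le_iff]
    constructor <;> linarith
  · have hk : ∀ k ∈ Finset.range n, ((koopman F ^ n - 1) φ) (F^[k] x) = 1 := fun k hk => by
      rw [Finset.mem_range] at hk
      rw [koopman_pow_sub_one_apply, ← iterate_add_apply, h1 k hk, h0 k hk, sub_zero]
    rw [birkhoffSum, Finset.sum_congr rfl hk]
    simp

theorem isPreperiodic_of_isClosed_range_koopman_sub_one (F : C(X, X))
    (h : IsClosed (Set.range ⇑(koopman F - 1))) : IsPreperiodic F := by
  by_contra hF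
  obtain ⟨C, hC0, hC⟩ := exists_abs_birkhoffSum_le_of_isClosed_range F h
  obtain ⟨n, hn⟩ := exists_nat_gt C
  obtain ⟨x, hx⟩ := exists_injOn_iterate_of_not_isPreperiodic hF (2 * n)
  obtain ⟨γ, hγ, hγ1, hγx⟩ := exists_mem_range_koopman_sub_one_birkhoffSum_eq F hx
  have hbound := hC γ hγ n x
  rw [hγx, Nat.abs_cast] at hbound
  linarith [mul_le_of_le_one_right hC0.le hγ1]

end Koopman

/-- for a compact Hausdorff space `X` and continuous `F : X → X`, the
range of `T_F − I` on `C(X, ℝ)` (with `T_F φ = φ ∘ F`) is closed (normal solvability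
of the cohomological equation in `C(X)`) iff `F` is preperiodic,
i.e. `F^{l+p} = F^{l}` for some `l ≥ 0`, `p ≥ 1`. -/
theorem normally_solvable_iff_preperiodic
    {X : Type*} [TopologicalSpace X] [CompactSpace X] [T2Space X]
    (F : X → X) (hF : Continuous F) :
    IsClosed (Set.range fun φ : C(X, ℝ) => φ.comp ⟨F, hF⟩ - φ) ↔
      ∃ (l p : ℕ), 1 ≤ p ∧ F^[l + p] = F^[l] :=
  ⟨isPreperiodic_of_isClosed_range_koopman_sub_one ⟨F, hF⟩,
    isClosed_range_koopman_sub_one_of_isPreperiodic ⟨F, hF⟩⟩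
end

section
/- Let s be the real vector space of all real sequences (ξ_n)_{n≥0} and τ the shift operator τ(ξ_n) = (ξ_{n+1}). Let L ⊆ s be a τ-invariant linear subspace that does not contain the constant sequence ε = (1, 1, 1, …). Then L admits a summation: there exists a linear functional σ : L → ℝ such that σ[ξ] − σ[τξ] = ξ_0 for every ξ = (ξ_n) ∈ L. -/
/-!
With `Δ := id - τ` on `L`, the Hardy–Kolmogorov axiom says exactly that `σ ∘ Δ` is evaluation
at `0`. A functional factors through `Δ` as soon as it vanishes on `ker Δ` (over a field every
injective linear map has a linear left inverse). The kernel of `Δ` consists of the constant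
sequences in `L`, and since `ε ∉ L` the only such sequence is `0`.
-/

open LinearMap

theorem LinearMap.exists_comp_eq_of_ker_le {K V W U : Type*} [DivisionRing K]
    [AddCommGroup V] [Module K V] [AddCommGroup W] [Module K W] [AddCommGroup U] [Module K U]
    (D : V →ₗ[K] W) (f : V →ₗ[K] U) (hker : ker D ≤ ker f) :
    ∃ g : W →ₗ[K] U, g ∘ₗ D = f := by
  obtain ⟨h, hh⟩ := ((ker D).liftQ D le_rfl).exists_leftInverse_of_injective
    ((ker D).ker_liftQ_eq_bot D le_rfl le_rfl)
  refine ⟨(ker D).liftQ f hker ∘ₗ h, ?_⟩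
  calc (ker D).liftQ f hker ∘ₗ h ∘ₗ D
      = (ker D).liftQ f hker ∘ₗ (h ∘ₗ (ker D).liftQ D le_rfl) ∘ₗ (ker D).mkQ := by
        rw [comp_assoc, Submodule.liftQ_mkQ]
    _ = f := by rw [hh, id_comp, Submodule.liftQ_mkQ]

theorem eq_const_of_forall_apply_succ_eq {α : Type*} {ξ : ℕ → α} (h : ∀ n, ξ (n + 1) = ξ n) :
    ξ = fun _ => ξ 0 := by
  funext n
  induction n with
  | zero => rfl
  | succ n ih => rw [h, ih]

theorem Submodule.apply_zero_eq_zero_of_forall_apply_succ_eq {K : Type*} [DivisionRing K]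
    {L : Submodule K (ℕ → K)} (hε : (fun _ => 1) ∉ L) {ξ : ℕ → K} (hξL : ξ ∈ L)
    (hξ : ∀ n, ξ (n + 1) = ξ n) : ξ 0 = 0 := by
  by_contra h0
  refine hε ?_
  have hε_eq : (fun _ => 1) = (ξ 0)⁻¹ • ξ := by
    rw [eq_const_of_forall_apply_succ_eq hξ]
    funext n
    simp [inv_mul_cancel₀ h0]
  rw [hε_eq]
  exact L.smul_mem _ hξL

theorem Submodule.ker_id_sub_shift_le_ker_eval_zero {K : Type*} [DivisionRing K]
    {L : Submodule K (ℕ → K)} (hshift : ∀ ξ ∈ L, funLeft K K (· + 1) ξ ∈ L)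
    (hε : (fun _ => 1) ∉ L) :
    ker (LinearMap.id - (funLeft K K (· + 1)).restrict hshift) ≤ ker (proj 0 ∘ₗ L.subtype) := by
  intro ξ hξ
  have hsucc : ∀ n, (ξ : ℕ → K) (n + 1) = (ξ : ℕ → K) n := fun n =>
    (sub_eq_zero.mp (congr_fun (congr_arg Subtype.val (mem_ker.mp hξ)) n)).symm
  exact L.apply_zero_eq_zero_of_forall_apply_succ_eq hε ξ.2 hsucc

/-- a shift-invariant linear subspace `L` of the space of real sequences
that does not contain the constant sequence `(1, 1, 1, …)` admits a summation:
a linear functional `σ : L → ℝ` with `σ[ξ] − σ[τξ] = ξ_0` for all `ξ ∈ L`. -/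
theorem shift_invariant_subspace_admits_summation
    (L : Submodule ℝ (ℕ → ℝ))
    (hshift : ∀ ξ ∈ L, (fun n => ξ (n + 1)) ∈ L)
    (hε : (fun _ : ℕ => (1 : ℝ)) ∉ L) :
    ∃ σ : L →ₗ[ℝ] ℝ, ∀ ξ : L,
      σ ξ - σ ⟨fun n => (ξ : ℕ → ℝ) (n + 1), hshift ξ ξ.2⟩ = (ξ : ℕ → ℝ) 0 := by
  obtain ⟨σ, hσ⟩ :=
    (LinearMap.id - (funLeft ℝ ℝ (· + 1)).restrict hshift).exists_comp_eq_of_ker_le _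
      (Submodule.ker_id_sub_shift_le_ker_eval_zero hshift hε)
  exact ⟨σ, fun ξ => (map_sub σ _ _).symm.trans (LinearMap.congr_fun hσ ξ)⟩
end
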